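/- arXiv:2206.05316 — 3 statements merged into one kernel-verified Lean document; each statement's English description precedes it below -/
import Mathlib

section
/- For every sufficiently small dyadic rational a, if open dyadic arcs (r_1,s_1), …, (r_k,s_k) cover S¹, then the rotation ρ_a : x ↦ x + a of S¹ lies in the subgroup of T generated by T_{[r_1,s_1]}, …, T_{[r_k,s_k]}. More precisely, this holds whenever the graph of ρ_a in S¹ × S¹ is contained in ⋃_i [r_i,s_i] × [r_i,s_i]. -/
noncomputable section

/-- A dyadic rational real number. -/
def IsDyadic (x : ℝ) : Prop := ∃ a : ℤ, ∃ n : ℕ, x = (a : ℝ) / 2 ^ n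

/-- `f` restricted to `[p,q]` is a Thompson-like map onto `[r,s]`: piecewise linear with
finitely many breakpoints, all breakpoints dyadic, all slopes integer powers of 2. -/
def ThompsonLike (p q r s : ℝ) (f : ℝ → ℝ) : Prop :=
  f p = r ∧ f q = s ∧
  ∃ n : ℕ, 0 < n ∧ ∃ x : ℕ → ℝ,
    x 0 = p ∧ x n = q ∧
    (∀ i, i < n → x i < x (i + 1)) ∧
    (∀ i, i ≤ n → IsDyadic (x i)) ∧
    (∀ i, i < n → ∃ k : ℤ, ∀ t ∈ Set.Icc (x i) (x (i + 1)),
      f t = f (x i) + (2 : ℝ) ^ k * (t - x i))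

/-- Membership in `F_{[p,q]}`, realised as permutations of `ℝ` that are Thompson-like
self-maps of `[p,q]` and the identity elsewhere. -/
def InF (p q : ℝ) (g : Equiv.Perm ℝ) : Prop :=
  ThompsonLike p q p q g ∧ ∀ x : ℝ, x ∉ Set.Icc p q → g x = x

/-- The circle `S¹ = ℝ/ℤ`. -/
abbrev Circle1 := AddCircle (1 : ℝ)

instance : Fact ((0 : ℝ) < 1) := ⟨one_pos⟩

/-- A dyadic point of the circle. -/
def IsDyadicC (x : Circle1) : Prop := ∃ t : ℝ, IsDyadic t ∧ x = (t : Circle1)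

/-- Membership in Thompson's group `T`, realised as permutations of the circle:
piecewise linear with finitely many breakpoints, all breakpoints dyadic (hence
preserving the dyadic points), and all slopes integer powers of 2. -/
def InT (g : Equiv.Perm Circle1) : Prop :=
  ∃ n : ℕ, 0 < n ∧ ∃ x y : ℕ → ℝ,
    x n = x 0 + 1 ∧
    (∀ i, i < n → x i < x (i + 1)) ∧
    (∀ i, i ≤ n → IsDyadic (x i)) ∧
    (∀ i, i < n → IsDyadic (y i)) ∧
    (∀ i, i < n → ∃ k : ℤ, ∀ t ∈ Set.Icc (x i) (x (i + 1)),
      g ((t : ℝ) : Circle1) = (((y i + (2 : ℝ) ^ k * (t - x i)) : ℝ) : Circle1))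

/-- Membership in `T_{[r,s]}`: elements of `T` that fix pointwise the complement of the
open arc `(r,s)` (arcs described by real lifts with `r < s ≤ r + 1`). -/
def InTArc (r s : ℝ) (g : Equiv.Perm Circle1) : Prop :=
  InT g ∧ ∀ t : ℝ, t ∈ Set.Icc s (r + 1) → g ((t : ℝ) : Circle1) = ((t : ℝ) : Circle1)

/-- The open arc `(r,s)` of the circle, described by real lifts. -/
def openArc (r s : ℝ) : Set Circle1 := {p | ∃ t : ℝ, r < t ∧ t < s ∧ p = (t : Circle1)}

/-- Rotation of the circle by `a`. -/
def rotC (a : ℝ) : Equiv.Perm Circle1 := Equiv.addRight ((a : ℝ) : Circle1)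

/-- The standard generator `x₀` of `F` as a map `[0,1] → [0,1]` (identity off `[0,1]`). -/
def x0fun : ℝ → ℝ := fun t =>
  if t < 0 then t else if t ≤ 1/4 then 2 * t else if t ≤ 1/2 then t + 1/4
    else if t ≤ 1 then t / 2 + 1/2 else t

/-- The standard generator `x₁` of `F` as a map `[0,1] → [0,1]` (identity off `[0,1]`). -/
def x1fun : ℝ → ℝ := fun t =>
  if t ≤ 1/2 then t else if t ≤ 5/8 then 2 * t - 1/2 else if t ≤ 3/4 then t + 1/8
    else if t ≤ 1 then t / 2 + 1/2 else t

/-- The element `ζ` as a map `[0,1] → [0,1]` (identity off `[0,1]`). -/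
def zetaFun : ℝ → ℝ := fun t =>
  if t < 0 then t else if t ≤ 1/4 then 2 * t else if t ≤ 3/4 then t / 2 + 3/8 else t

/-- A lift `[0,1] → [1/2,3/2]` of the order-3 rotation-like element
`α = (0,10,11) ↦ (10,11,0)` of `T`. -/
def alpha3Fun : ℝ → ℝ := fun t =>
  if t ≤ 1/2 then t / 2 + 1/2 else if t ≤ 3/4 then t + 1/4 else 2 * t - 1/2


-- Part A : dyadic lemmas
lemma isDyadic_intCast (a : ℤ) : IsDyadic (a : ℝ) := ⟨a, 0, by simp⟩

lemma isDyadic_add {x y : ℝ} (hx : IsDyadic x) (hy : IsDyadic y) : IsDyadic (x + y) := by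
  obtain ⟨a, n, rfl⟩ := hx; obtain ⟨b, m, rfl⟩ := hy
  refine ⟨a * 2 ^ m + b * 2 ^ n, n + m, ?_⟩
  push_cast
  rw [pow_add]
  field_simp

lemma isDyadic_neg {x : ℝ} (hx : IsDyadic x) : IsDyadic (-x) := by
  obtain ⟨a, n, rfl⟩ := hx; exact ⟨-a, n, by push_cast; ring⟩

lemma isDyadic_sub {x y : ℝ} (hx : IsDyadic x) (hy : IsDyadic y) : IsDyadic (x - y) := by
  rw [sub_eq_add_neg]; exact isDyadic_add hx (isDyadic_neg hy)

lemma isDyadic_mul {x y : ℝ} (hx : IsDyadic x) (hy : IsDyadic y) : IsDyadic (x * y) := by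
  obtain ⟨a, n, rfl⟩ := hx; obtain ⟨b, m, rfl⟩ := hy
  refine ⟨a * b, n + m, ?_⟩
  push_cast
  rw [pow_add]
  ring

lemma isDyadic_invPow (n : ℕ) : IsDyadic (1 / 2 ^ n : ℝ) := ⟨1, n, by norm_num⟩

lemma isDyadic_one : IsDyadic (1 : ℝ) := ⟨1, 0, by norm_num⟩

lemma isDyadic_natMul {y : ℝ} (j : ℕ) (hy : IsDyadic y) : IsDyadic ((j : ℝ) * y) := by
  have := isDyadic_intCast (j : ℤ)
  push_cast at this
  exact isDyadic_mul this hy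

lemma isDyadic_twoMul {y : ℝ} (hy : IsDyadic y) : IsDyadic (2 * y) := by
  have e : 2 * y = y + y := by ring
  rw [e]; exact isDyadic_add hy hy

lemma isDyadic_half {y : ℝ} (hy : IsDyadic y) : IsDyadic (y / 2) := by
  have : y / 2 = y * (1 / 2 ^ 1) := by ring
  rw [this]; exact isDyadic_mul hy (isDyadic_invPow 1)

-- Part B : periodic extension and circle permutations

lemma equivariant_int {g : ℝ → ℝ} (hg : ∀ y, g (y + 1) = g y + 1) :
    ∀ (n : ℤ) (y : ℝ), g (y + n) = g y + n := by
  intro n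
  induction n using Int.induction_on with
  | zero => simp
  | succ k ih =>
      intro y
      have h1 : ((k : ℤ) + 1 : ℤ) = ((k + 1 : ℤ)) := by ring
      have h2 : y + ((k : ℤ) + 1 : ℤ) = (y + (k : ℤ)) + 1 := by push_cast; ring
      rw [h2, hg, ih]
      push_cast
      ring
  | pred k ih =>
      intro y
      have h2 : y + (-(k : ℤ) - 1 : ℤ) + 1 = y + (-(k : ℤ) : ℤ) := by push_cast; ring
      have h3 := hg (y + (-(k : ℤ) - 1 : ℤ))
      rw [h2, ih] at h3
      push_cast at h3 ⊢
      linarith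

/-- Extend `f`, defined on the fundamental domain `[o, o+1)`, 1-periodically
(in the equivariant sense). -/
def perExt (o : ℝ) (f : ℝ → ℝ) : ℝ → ℝ := fun x => f (x - ⌊x - o⌋) + ⌊x - o⌋

lemma perExt_eq_on {o : ℝ} {f : ℝ → ℝ} {x : ℝ} (hx : x ∈ Set.Ico o (o + 1)) :
    perExt o f x = f x := by
  have h0 : ⌊x - o⌋ = 0 := by
    rw [Int.floor_eq_zero_iff]
    constructor
    · linarith [hx.1]
    · simpa using by linarith [hx.2]
  simp [perExt, h0]

lemma perExt_add_one (o : ℝ) (f : ℝ → ℝ) (x : ℝ) :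
    perExt o f (x + 1) = perExt o f x + 1 := by
  have : x + 1 - o = (x - o) + 1 := by ring
  simp only [perExt, this, Int.floor_add_one]
  push_cast
  ring_nf

lemma perExt_add_int (o : ℝ) (f : ℝ → ℝ) (x : ℝ) (n : ℤ) :
    perExt o f (x + n) = perExt o f x + n := by
  exact equivariant_int (perExt_add_one o f) n x

/-- Build a permutation of `ℝ` from mutually inverse self-maps of `[o, o+1)`. -/
def mkPermR (o : ℝ) (f g : ℝ → ℝ)
    (hf : ∀ x ∈ Set.Ico o (o + 1), f x ∈ Set.Ico o (o + 1))
    (hg : ∀ x ∈ Set.Ico o (o + 1), g x ∈ Set.Ico o (o + 1))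
    (hgf : ∀ x ∈ Set.Ico o (o + 1), g (f x) = x)
    (hfg : ∀ x ∈ Set.Ico o (o + 1), f (g x) = x) : Equiv.Perm ℝ where
  toFun := perExt o f
  invFun := perExt o g
  left_inv := by
    intro x
    have hmem : x - ⌊x - o⌋ ∈ Set.Ico o (o + 1) := by
      constructor
      · have := Int.floor_le (x - o); linarith
      · have := Int.lt_floor_add_one (x - o); linarith
    have h1 : perExt o f x = f (x - ⌊x - o⌋) + ⌊x - o⌋ := rfl
    rw [h1, perExt_add_int, perExt_eq_on (hf _ hmem), hgf _ hmem]
    push_cast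
    ring
  right_inv := by
    intro x
    have hmem : x - ⌊x - o⌋ ∈ Set.Ico o (o + 1) := by
      constructor
      · have := Int.floor_le (x - o); linarith
      · have := Int.lt_floor_add_one (x - o); linarith
    have h1 : perExt o g x = g (x - ⌊x - o⌋) + ⌊x - o⌋ := rfl
    rw [h1, perExt_add_int, perExt_eq_on (hg _ hmem), hfg _ hmem]
    push_cast
    ring

lemma mkPermR_apply (o : ℝ) (f g : ℝ → ℝ) (hf hg hgf hfg) (x : ℝ) :
    mkPermR o f g hf hg hgf hfg x = perExt o f x := rfl

/-- Lift an equivariant permutation of `ℝ` to a permutation of the circle. -/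
def circPerm (e : Equiv.Perm ℝ) (he : ∀ x, e (x + 1) = e x + 1) : Equiv.Perm Circle1 := by
  have key : ∀ (n : ℤ) (y : ℝ), e (y + n) = e y + n := equivariant_int he
  have keps : ∀ (n : ℤ) (y : ℝ), e.symm (y + n) = e.symm y + n := by
    intro n y
    apply e.injective
    rw [key n (e.symm y)]
    simp
  have hrel : ∀ x y : ℝ, (x : Circle1) = (y : Circle1) → ((e x : ℝ) : Circle1) = ((e y : ℝ) : Circle1) := by
    intro x y hxy
    rw [QuotientAddGroup.eq] at hxy ⊢
    obtain ⟨n, hn⟩ := AddSubgroup.mem_zmultiples_iff.mp hxy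
    refine AddSubgroup.mem_zmultiples_iff.mpr ⟨n, ?_⟩
    have hy : y = x + n := by
      have : n • (1:ℝ) = n := by simp
      rw [this] at hn; linarith
    rw [hy, key n x]
    simp
  have hrels : ∀ x y : ℝ, (x : Circle1) = (y : Circle1) →
      ((e.symm x : ℝ) : Circle1) = ((e.symm y : ℝ) : Circle1) := by
    intro x y hxy
    rw [QuotientAddGroup.eq] at hxy ⊢
    obtain ⟨n, hn⟩ := AddSubgroup.mem_zmultiples_iff.mp hxy
    refine AddSubgroup.mem_zmultiples_iff.mpr ⟨n, ?_⟩
    have hy : y = x + n := by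
      have : n • (1:ℝ) = n := by simp
      rw [this] at hn; linarith
    rw [hy, keps n x]
    simp
  exact
  { toFun := fun q => Quotient.liftOn' q (fun x => ((e x : ℝ) : Circle1))
      (fun x y hxy => hrel x y (Quotient.sound' hxy))
    invFun := fun q => Quotient.liftOn' q (fun x => ((e.symm x : ℝ) : Circle1))
      (fun x y hxy => hrels x y (Quotient.sound' hxy))
    left_inv := by
      intro q
      induction q using QuotientAddGroup.induction_on with
      | H x => show ((e.symm (e x) : ℝ) : Circle1) = _ ; rw [e.symm_apply_apply]
    right_inv := by
      intro q
      induction q using QuotientAddGroup.induction_on with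
      | H x => show ((e (e.symm x) : ℝ) : Circle1) = _ ; rw [e.apply_symm_apply] }

lemma circPerm_mk (e : Equiv.Perm ℝ) (he : ∀ x, e (x + 1) = e x + 1) (x : ℝ) :
    circPerm e he ((x : ℝ) : Circle1) = ((e x : ℝ) : Circle1) := rfl


-- Part C : the bump maps

/-- The basic bump map: slope 2 on `[A, A+s]`, translation by `s` on `[A+s, M]`,
slope `1/2` on `[M, M+2s]`, identity on `[M+2s, A+1)`. -/
def bumpFun (A s M : ℝ) : ℝ → ℝ := fun x =>
  if x < A + s then 2 * x - A
  else if x ≤ M then x + s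
  else if x < M + 2 * s then x / 2 + M / 2 + s
  else x

def bumpInv (A s M : ℝ) : ℝ → ℝ := fun y =>
  if y < A + 2 * s then (y + A) / 2
  else if y ≤ M + s then y - s
  else if y < M + 2 * s then 2 * y - M - 2 * s
  else y

section bump
variable {A s M : ℝ} (hs : 0 < s) (h1 : A + s < M) (h2 : M + 2 * s < A + 1)

include hs h1 h2

lemma bump_maps : ∀ x ∈ Set.Ico A (A + 1), bumpFun A s M x ∈ Set.Ico A (A + 1) := by
  intro x hx
  obtain ⟨hx1, hx2⟩ := hx
  unfold bumpFun
  split_ifs <;> constructor <;> linarith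

lemma bumpInv_maps : ∀ x ∈ Set.Ico A (A + 1), bumpInv A s M x ∈ Set.Ico A (A + 1) := by
  intro x hx
  obtain ⟨hx1, hx2⟩ := hx
  unfold bumpInv
  split_ifs <;> constructor <;> linarith

omit h2 in
lemma bump_leftInv : ∀ x ∈ Set.Ico A (A + 1), bumpInv A s M (bumpFun A s M x) = x := by
  intro x hx
  obtain ⟨hx1, hx2⟩ := hx
  unfold bumpFun bumpInv
  split_ifs <;> linarith

omit h2 in
lemma bump_rightInv : ∀ x ∈ Set.Ico A (A + 1), bumpFun A s M (bumpInv A s M x) = x := by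
  intro x hx
  obtain ⟨hx1, hx2⟩ := hx
  unfold bumpFun bumpInv
  split_ifs <;> linarith

/-- The bump as a permutation of `ℝ`. -/
def bumpPerm : Equiv.Perm ℝ :=
  mkPermR A (bumpFun A s M) (bumpInv A s M) (bump_maps hs h1 h2) (bumpInv_maps hs h1 h2)
    (bump_leftInv hs h1) (bump_rightInv hs h1)

lemma bumpPerm_apply (x : ℝ) : bumpPerm hs h1 h2 x = perExt A (bumpFun A s M) x := rfl

lemma bumpPerm_equivariant (x : ℝ) :
    bumpPerm hs h1 h2 (x + 1) = bumpPerm hs h1 h2 x + 1 := by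
  rw [bumpPerm_apply, bumpPerm_apply, perExt_add_one]

/-- The bump as a permutation of the circle. -/
def bumpCirc : Equiv.Perm Circle1 := circPerm (bumpPerm hs h1 h2) (bumpPerm_equivariant hs h1 h2)

lemma bumpCirc_mk (x : ℝ) :
    bumpCirc hs h1 h2 ((x : ℝ) : Circle1) = ((perExt A (bumpFun A s M) x : ℝ) : Circle1) := rfl

-- Closed-form values of the periodic extension on the pieces.
lemma pe_piece1 {t : ℝ} (ht : t ∈ Set.Icc A (A + s)) :
    perExt A (bumpFun A s M) t = 2 * t - A := by
  have hmem : t ∈ Set.Ico A (A + 1) := ⟨ht.1, by linarith [ht.2]⟩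
  rw [perExt_eq_on hmem]
  unfold bumpFun
  split_ifs <;> linarith [ht.1, ht.2]

lemma pe_piece2 {t : ℝ} (ht : t ∈ Set.Icc (A + s) M) :
    perExt A (bumpFun A s M) t = t + s := by
  have hmem : t ∈ Set.Ico A (A + 1) := ⟨by linarith [ht.1], by linarith [ht.2]⟩
  rw [perExt_eq_on hmem]
  unfold bumpFun
  split_ifs <;> linarith [ht.1, ht.2]

lemma pe_piece3 {t : ℝ} (ht : t ∈ Set.Icc M (M + 2 * s)) :
    perExt A (bumpFun A s M) t = t / 2 + M / 2 + s := by
  have hmem : t ∈ Set.Ico A (A + 1) := ⟨by linarith [ht.1], by linarith [ht.2]⟩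
  rw [perExt_eq_on hmem]
  unfold bumpFun
  split_ifs <;> linarith [ht.1, ht.2]

lemma pe_piece4 {t : ℝ} (ht : t ∈ Set.Icc (M + 2 * s) (A + 1)) :
    perExt A (bumpFun A s M) t = t := by
  rcases lt_or_eq_of_le ht.2 with hlt | heq
  · have hmem : t ∈ Set.Ico A (A + 1) := ⟨by linarith [ht.1], hlt⟩
    rw [perExt_eq_on hmem]
    unfold bumpFun
    split_ifs <;> linarith [ht.1]
  · subst heq
    have : perExt A (bumpFun A s M) (A + 1) = perExt A (bumpFun A s M) A + 1 := by
      rw [perExt_add_one]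
    rw [this, perExt_eq_on ⟨le_refl A, by linarith⟩]
    unfold bumpFun
    split_ifs <;> linarith

/-- Extended identity region: the periodic extension is the identity on
`[M + 2s - 1, A]` as well. -/
lemma pe_piece0 {t : ℝ} (ht : t ∈ Set.Icc (M + 2 * s - 1) A) :
    perExt A (bumpFun A s M) t = t := by
  have h4 : perExt A (bumpFun A s M) (t + 1) = t + 1 :=
    pe_piece4 hs h1 h2 ⟨by linarith [ht.1], by linarith [ht.2]⟩
  have := perExt_add_one A (bumpFun A s M) t
  rw [h4] at this
  linarith

/-- The bump fixes all points of the circle represented by reals in `[M+2s, A+1]`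
(up to an integer translate). -/
lemma bumpCirc_fix {t : ℝ} {n : ℤ} (ht : t + n ∈ Set.Icc (M + 2 * s) (A + 1)) :
    bumpCirc hs h1 h2 ((t : ℝ) : Circle1) = ((t : ℝ) : Circle1) := by
  rw [bumpCirc_mk]
  have h4 := pe_piece4 hs h1 h2 ht
  rw [perExt_add_int] at h4
  have : perExt A (bumpFun A s M) t = t := by linarith
  rw [this]


/-- The partition witnessing that a bump is in Thompson's group `T`. -/
lemma bumpCirc_InT (hA : IsDyadic A) (hsD : IsDyadic s) (hM : IsDyadic M) :
    ∃ n : ℕ, 0 < n ∧ ∃ x y : ℕ → ℝ,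
      x n = x 0 + 1 ∧
      (∀ i, i < n → x i < x (i + 1)) ∧
      (∀ i, i ≤ n → IsDyadic (x i)) ∧
      (∀ i, i < n → IsDyadic (y i)) ∧
      (∀ i, i < n → ∃ k : ℤ, ∀ t ∈ Set.Icc (x i) (x (i + 1)),
        bumpCirc hs h1 h2 ((t : ℝ) : Circle1) =
          (((y i + (2 : ℝ) ^ k * (t - x i)) : ℝ) : Circle1)) := by
  refine ⟨4, by norm_num,
    (fun i => match i with | 0 => A | 1 => A + s | 2 => M | 3 => M + 2 * s | _ => A + 1),
    (fun i => match i with | 0 => A | 1 => A + 2 * s | 2 => M + s | _ => M + 2 * s),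
    rfl, ?_, ?_, ?_, ?_⟩
  · intro i hi
    interval_cases i <;> simp <;> linarith
  · have h2s : IsDyadic (2 * s) := by
      have := isDyadic_add hsD hsD
      have e : 2 * s = s + s := by ring
      rwa [e]
    intro i hi
    interval_cases i
    · exact hA
    · exact isDyadic_add hA hsD
    · exact hM
    · exact isDyadic_add hM h2s
    · exact isDyadic_add hA isDyadic_one
  · have h2s : IsDyadic (2 * s) := by
      have := isDyadic_add hsD hsD
      have e : 2 * s = s + s := by ring
      rwa [e]
    intro i hi
    interval_cases i
    · exact hA
    · exact isDyadic_add hA h2s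
    · exact isDyadic_add hM hsD
    · exact isDyadic_add hM h2s
  · intro i hi
    interval_cases i
    · refine ⟨1, fun t ht => ?_⟩
      rw [bumpCirc_mk, pe_piece1 hs h1 h2 ht]
      congr 1
      norm_num
      ring
    · refine ⟨0, fun t ht => ?_⟩
      rw [bumpCirc_mk, pe_piece2 hs h1 h2 ht]
      congr 1
      norm_num
      ring
    · refine ⟨-1, fun t ht => ?_⟩
      rw [bumpCirc_mk, pe_piece3 hs h1 h2 ht]
      congr 1
      norm_num
      ring
    · refine ⟨0, fun t ht => ?_⟩
      rw [bumpCirc_mk, pe_piece4 hs h1 h2 ht]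
      congr 1
      norm_num

end bump

-- Part D : composition identities

lemma eq_of_eq_on_Ico {f g : ℝ → ℝ} (o : ℝ) (hf : ∀ x, f (x + 1) = f x + 1)
    (hg : ∀ x, g (x + 1) = g x + 1) (H : ∀ x ∈ Set.Ico o (o + 1), f x = g x) (x : ℝ) :
    f x = g x := by
  have hmem : x - ⌊x - o⌋ ∈ Set.Ico o (o + 1) := by
    constructor
    · have := Int.floor_le (x - o); linarith
    · have := Int.lt_floor_add_one (x - o); linarith
  have e : x = (x - ⌊x - o⌋) + (⌊x - o⌋ : ℤ) := by push_cast; ring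
  rw [e, equivariant_int hf, equivariant_int hg, H _ hmem]

lemma comp_one {h P : ℝ} (hh : 0 < h) (hP : 0 ≤ P) (hP2 : P ≤ 1 - 6 * h) (x : ℝ) :
    perExt (P + h) (bumpFun (P + h) (h / 2) (P + 2 * h))
        (perExt (-(2 * h)) (bumpFun (-(2 * h)) h P) x) =
      perExt (-(2 * h)) (bumpFun (-(2 * h)) h (P + h)) x := by
  -- hypotheses for the three bumps
  have hsI : (0:ℝ) < h := hh
  have h1I : -(2 * h) + h < P := by linarith
  have h2I : P + 2 * h < -(2 * h) + 1 := by linarith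
  have hsO : (0:ℝ) < h / 2 := by linarith
  have h1O : (P + h) + h / 2 < P + 2 * h := by linarith
  have h2O : (P + 2 * h) + 2 * (h / 2) < (P + h) + 1 := by linarith
  have h1T : -(2 * h) + h < P + h := by linarith
  have h2T : (P + h) + 2 * h < -(2 * h) + 1 := by linarith
  refine eq_of_eq_on_Ico (f := fun y => perExt (P + h) (bumpFun (P + h) (h / 2) (P + 2 * h))
      (perExt (-(2 * h)) (bumpFun (-(2 * h)) h P) y))
    (g := perExt (-(2 * h)) (bumpFun (-(2 * h)) h (P + h))) (-(2 * h))
    (fun y => by simp only [perExt_add_one]) (fun y => perExt_add_one _ _ y) ?_ x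
  intro x hx
  obtain ⟨hx1, hx2⟩ := hx
  rcases le_total x (-h) with hc1 | hc1
  · rw [pe_piece1 hsI h1I h2I ⟨hx1, by linarith⟩,
      pe_piece0 hsO h1O h2O ⟨by linarith, by linarith⟩,
      pe_piece1 hsI h1T h2T ⟨hx1, by linarith⟩]
  · rcases le_total x P with hc2 | hc2
    · rw [pe_piece2 hsI h1I h2I ⟨by linarith, by linarith⟩,
        pe_piece0 hsO h1O h2O ⟨by linarith, by linarith⟩,
        pe_piece2 hsI h1T h2T ⟨by linarith, by linarith⟩]
    · rcases le_total x (P + h) with hc3 | hc3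
      · rw [pe_piece3 hsI h1I h2I ⟨by linarith, by linarith⟩,
          pe_piece1 hsO h1O h2O ⟨by linarith, by linarith⟩,
          pe_piece2 hsI h1T h2T ⟨by linarith, by linarith⟩]
        ring
      · rcases le_total x (P + 2 * h) with hc4 | hc4
        · rw [pe_piece3 hsI h1I h2I ⟨by linarith, by linarith⟩,
            pe_piece2 hsO h1O h2O ⟨by linarith, by linarith⟩,
            pe_piece3 hsI h1T h2T ⟨by linarith, by linarith⟩]
          ring
        · rcases le_total x (P + 3 * h) with hc5 | hc5
          · rw [pe_piece4 hsI h1I h2I ⟨by linarith, by linarith⟩,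
              pe_piece3 hsO h1O h2O ⟨by linarith, by linarith⟩,
              pe_piece3 hsI h1T h2T ⟨by linarith, by linarith⟩]
            ring
          · rw [pe_piece4 hsI h1I h2I ⟨by linarith, by linarith⟩,
              pe_piece4 hsO h1O h2O ⟨by linarith, by linarith⟩,
              pe_piece4 hsI h1T h2T ⟨by linarith, by linarith⟩]

lemma comp_last {h : ℝ} (hh : 0 < h) (hh8 : h ≤ 1 / 8) (x : ℝ) :
    perExt (1 - 4 * h) (bumpFun (1 - 4 * h) h (1 - 2 * h))
        (perExt (-(2 * h)) (bumpFun (-(2 * h)) h (1 - 5 * h)) x) = x + h := by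
  have hsI : (0:ℝ) < h := hh
  have h1I : -(2 * h) + h < 1 - 5 * h := by linarith
  have h2I : (1 - 5 * h) + 2 * h < -(2 * h) + 1 := by linarith
  have h1O : (1 - 4 * h) + h < 1 - 2 * h := by linarith
  have h2O : (1 - 2 * h) + 2 * h < (1 - 4 * h) + 1 := by linarith
  refine eq_of_eq_on_Ico (f := fun y => perExt (1 - 4 * h) (bumpFun (1 - 4 * h) h (1 - 2 * h))
      (perExt (-(2 * h)) (bumpFun (-(2 * h)) h (1 - 5 * h)) y))
    (g := fun y => y + h) (-(2 * h))
    (fun y => by simp only [perExt_add_one]) (fun y => by ring) ?_ x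
  intro x hx
  obtain ⟨hx1, hx2⟩ := hx
  rcases le_total x (-h) with hc1 | hc1
  · -- F x = 2x + 2h ∈ [-2h, 0]; Ψ via pe_piece3 shifted by one period
    rw [pe_piece1 hsI h1I h2I ⟨hx1, by linarith⟩]
    have key : perExt (1 - 4 * h) (bumpFun (1 - 4 * h) h (1 - 2 * h)) ((2 * x - -(2 * h)) + (1:ℤ)) =
        ((2 * x - -(2 * h)) + (1:ℤ)) / 2 + (1 - 2 * h) / 2 + h :=
      pe_piece3 hsI h1O h2O ⟨by push_cast; linarith, by push_cast; linarith⟩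
    rw [perExt_add_int] at key
    push_cast at key
    linarith
  · rcases le_total x (1 - 5 * h) with hc2 | hc2
    · rw [pe_piece2 hsI h1I h2I ⟨by linarith, by linarith⟩,
        pe_piece0 hsI h1O h2O ⟨by linarith, by linarith⟩]
    · rcases le_total x (1 - 3 * h) with hc3 | hc3
      · rw [pe_piece3 hsI h1I h2I ⟨by linarith, by linarith⟩,
          pe_piece1 hsI h1O h2O ⟨by linarith, by linarith⟩]
        ring
      · rw [pe_piece4 hsI h1I h2I ⟨by linarith, by linarith⟩,
          pe_piece2 hsI h1O h2O ⟨by linarith, by linarith⟩]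


-- Part E : permutation-level identities and membership lemmas

lemma bumpCirc_congr {A s M M' : ℝ} (e : M = M') {hs : 0 < s} {h1 : A + s < M}
    {h2 : M + 2 * s < A + 1} {h1' : A + s < M'} {h2' : M' + 2 * s < A + 1} :
    bumpCirc hs h1 h2 = bumpCirc (M := M') hs h1' h2' := by
  subst e; rfl

lemma bump_mul {h P : ℝ} (hh : 0 < h) (hP : 0 ≤ P) (hP2 : P ≤ 1 - 6 * h)
    (a1 : 0 < h / 2) (a2 : (P + h) + h / 2 < P + 2 * h) (a3 : (P + 2 * h) + 2 * (h / 2) < (P + h) + 1)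
    (b1 : 0 < h) (b2 : -(2 * h) + h < P) (b3 : P + 2 * h < -(2 * h) + 1)
    (c1 : 0 < h) (c2 : -(2 * h) + h < P + h) (c3 : (P + h) + 2 * h < -(2 * h) + 1) :
    bumpCirc a1 a2 a3 * bumpCirc b1 b2 b3 = bumpCirc c1 c2 c3 := by
  apply Equiv.ext
  intro q
  induction q using QuotientAddGroup.induction_on with
  | H x =>
    show bumpCirc a1 a2 a3 (bumpCirc b1 b2 b3 ((x : ℝ) : Circle1)) = _
    rw [bumpCirc_mk, bumpCirc_mk, bumpCirc_mk]
    exact congrArg _ (comp_one hh hP hP2 x)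

lemma rotC_mk (a x : ℝ) : rotC a ((x : ℝ) : Circle1) = (((x + a : ℝ)) : Circle1) := by
  show ((x : ℝ) : Circle1) + ((a : ℝ) : Circle1) = _
  norm_cast

lemma bump_last {h : ℝ} (hh : 0 < h) (hh8 : h ≤ 1 / 8)
    (a1 : 0 < h) (a2 : (1 - 4 * h) + h < 1 - 2 * h) (a3 : (1 - 2 * h) + 2 * h < (1 - 4 * h) + 1)
    (b1 : 0 < h) (b2 : -(2 * h) + h < 1 - 5 * h) (b3 : (1 - 5 * h) + 2 * h < -(2 * h) + 1) :
    bumpCirc a1 a2 a3 * bumpCirc b1 b2 b3 = rotC h := by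
  apply Equiv.ext
  intro q
  induction q using QuotientAddGroup.induction_on with
  | H x =>
    show bumpCirc a1 a2 a3 (bumpCirc b1 b2 b3 ((x : ℝ) : Circle1)) = _
    rw [bumpCirc_mk, bumpCirc_mk, rotC_mk]
    exact congrArg _ (comp_last hh hh8 x)

lemma rotC_add (x y : ℝ) : rotC (x + y) = rotC x * rotC y := by
  apply Equiv.ext
  intro q
  show q + (((x + y : ℝ)) : Circle1) = (q + ((y:ℝ) : Circle1)) + ((x:ℝ) : Circle1)
  rw [AddCircle.coe_add]
  abel

lemma rotC_zero : rotC 0 = 1 := by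
  apply Equiv.ext
  intro q
  show q + _ = q
  norm_num

lemma rotC_zpow (h : ℝ) (M : ℤ) : rotC ((M : ℝ) * h) = rotC h ^ M := by
  induction M using Int.induction_on with
  | zero => simpa using rotC_zero
  | succ k ih =>
      have e : ((k + 1 : ℤ) : ℝ) * h = (k : ℝ) * h + h := by push_cast; ring
      rw [e, rotC_add, zpow_add_one]
      push_cast at ih ⊢
      rw [ih]
  | pred k ih =>
      have e : ((-k - 1 : ℤ) : ℝ) * h = ((-k : ℤ) : ℝ) * h + (-h) := by push_cast; ring
      have einv : rotC (-h) = (rotC h)⁻¹ := by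
        have h1 : rotC (-h) * rotC h = 1 := by
          rw [← rotC_add]
          norm_num [rotC_zero]
        exact eq_inv_of_mul_eq_one_left h1
      rw [e, rotC_add, ih, einv, zpow_sub_one]

lemma bumpCirc_InTArc {A s M : ℝ} (hs : 0 < s) (h1 : A + s < M) (h2 : M + 2 * s < A + 1)
    (hA : IsDyadic A) (hsD : IsDyadic s) (hM : IsDyadic M)
    (rr ss : ℝ) (K : ℤ) (hlo : rr + K ≤ A) (hhi : M + 2 * s ≤ ss + K) :
    InTArc rr ss (bumpCirc hs h1 h2) := by
  constructor
  · exact bumpCirc_InT hs h1 h2 hA hsD hM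
  · intro t ht
    exact bumpCirc_fix hs h1 h2 (n := K) ⟨by linarith [ht.1], by linarith [ht.2]⟩




set_option maxHeartbeats 2000000 in
theorem statement8 (k : ℕ) (r s : Fin k → ℝ)
    (hr : ∀ i, IsDyadic (r i)) (hs : ∀ i, IsDyadic (s i))
    (hrs : ∀ i, r i < s i) (hproper : ∀ i, s i < r i + 1)
    (hcover : (⋃ i, openArc (r i) (s i)) = Set.univ)
    (a : ℝ) (ha : IsDyadic a)
    (hgraph : ∀ p : Circle1, ∃ i, ∃ t u : ℝ,
      t ∈ Set.Icc (r i) (s i) ∧ u ∈ Set.Icc (r i) (s i) ∧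
      p = (t : Circle1) ∧ p + ((a : ℝ) : Circle1) = (u : Circle1)) :
    rotC a ∈ Subgroup.closure (⋃ i, {g : Equiv.Perm Circle1 | InTArc (r i) (s i) g}) := by
  classical
  obtain ⟨A0, n0, ha0⟩ := ha
  -- the arcs, lifted to ℝ, cover ℝ
  have hcovR : ∀ x : ℝ, ∃ (i : Fin k) (z : ℤ), x ∈ Set.Ioo (r i + z) (s i + z) := by
    intro x
    have hx : ((x : ℝ) : Circle1) ∈ ⋃ i, openArc (r i) (s i) := by
      rw [hcover]; trivial
    rw [Set.mem_iUnion] at hx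
    simp only [openArc, Set.mem_setOf_eq] at hx
    obtain ⟨i, t, ht1, ht2, ht3⟩ := hx
    rw [QuotientAddGroup.eq] at ht3
    obtain ⟨z, hz⟩ := AddSubgroup.mem_zmultiples_iff.mp ht3
    have hz' : (z : ℝ) = -x + t := by simpa using hz
    refine ⟨i, -z, ?_⟩
    constructor <;> push_cast <;> linarith
  -- Lebesgue number of the cover
  obtain ⟨δ, hδ, hLeb⟩ := lebesgue_number_lemma_of_metric
    (isCompact_Icc : IsCompact (Set.Icc (0:ℝ) 1))
    (c := fun p : Fin k × ℤ => Set.Ioo (r p.1 + p.2) (s p.1 + p.2)) (fun p => isOpen_Ioo)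
    (fun x _ => by obtain ⟨i, z, hmem⟩ := hcovR x; exact Set.mem_iUnion.mpr ⟨⟨i, z⟩, hmem⟩)
  -- choose the scale
  obtain ⟨N1, hN1⟩ := exists_pow_lt_of_lt_one (show (0:ℝ) < δ / 8 by linarith)
    (show (1:ℝ) / 2 < 1 by norm_num)
  set N := max N1 (max n0 3) with hN
  set h : ℝ := 1 / 2 ^ N with hhdef
  have hh : 0 < h := by positivity
  have hmono : ((1:ℝ)/2) ^ N ≤ ((1:ℝ)/2) ^ N1 :=
    pow_le_pow_of_le_one (by norm_num) (by norm_num) (le_max_left _ _)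
  have hhN : h = ((1:ℝ)/2) ^ N := by rw [hhdef, div_pow, one_pow]
  have hδ8 : 8 * h < δ := by
    rw [hhN]
    have := lt_of_le_of_lt hmono hN1
    linarith
  have hN3 : 3 ≤ N := le_trans (le_max_right n0 3) (le_max_right N1 _)
  have hn0N : n0 ≤ N := le_trans (le_max_left n0 3) (le_max_right N1 _)
  have hdyh : IsDyadic h := isDyadic_invPow N
  set m : ℕ := 2 ^ N with hm
  have hm8 : 8 ≤ m := by
    calc (8:ℕ) = 2 ^ 3 := by norm_num
    _ ≤ 2 ^ N := Nat.pow_le_pow_right (by norm_num) hN3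
  have hmh : (m : ℝ) * h = 1 := by
    rw [hhdef, hm]
    push_cast
    field_simp
  have hh18 : h ≤ 1 / 8 := by
    have : (8:ℝ) ≤ (m:ℝ) := by exact_mod_cast hm8
    nlinarith
  set S : Set (Equiv.Perm Circle1) :=
    ⋃ i, {g : Equiv.Perm Circle1 | InTArc (r i) (s i) g} with hS
  -- membership of small bumps in the generated subgroup
  have memS : ∀ (A s' M : ℝ) (b1 : 0 < s') (b2 : A + s' < M) (b3 : M + 2 * s' < A + 1),
      IsDyadic A → IsDyadic s' → IsDyadic M →
      M + 2 * s' ≤ A + 4 * h → 0 ≤ A + (M + 2 * s') → A + (M + 2 * s') ≤ 2 →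
      bumpCirc b1 b2 b3 ∈ Subgroup.closure S := by
    intro A s' M b1 b2 b3 dA ds dM hA2 hA3 hA4
    set c := (A + (M + 2 * s')) / 2 with hc
    have hcmem : c ∈ Set.Icc (0:ℝ) 1 := by
      constructor
      · rw [hc]; linarith
      · rw [hc]; linarith
    obtain ⟨⟨i, z⟩, hball⟩ := hLeb c hcmem
    have hAball : A ∈ Metric.ball c δ := by
      rw [Real.ball_eq_Ioo]
      constructor
      · rw [hc]; linarith
      · rw [hc]; linarith
    have hBball : M + 2 * s' ∈ Metric.ball c δ := by
      rw [Real.ball_eq_Ioo]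
      constructor
      · rw [hc]; linarith
      · rw [hc]; linarith
    have hA' := hball hAball
    have hB' := hball hBball
    apply Subgroup.subset_closure
    rw [hS]
    refine Set.mem_iUnion.mpr ⟨i, ?_⟩
    exact bumpCirc_InTArc b1 b2 b3 dA ds dM (r i) (s i) z (le_of_lt hA'.1) (le_of_lt hB'.2)
  have hdy2h : IsDyadic (-(2*h)) := by
    have e : -(2*h) = -(h + h) := by ring
    rw [e]; exact isDyadic_neg (isDyadic_add hdyh hdyh)
  -- the chain
  have key : ∀ j : ℕ, j + 5 ≤ m →
      ∀ (b1 : 0 < h) (b2 : -(2*h) + h < (j:ℝ) * h) (b3 : (j:ℝ) * h + 2*h < -(2*h) + 1),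
      bumpCirc b1 b2 b3 ∈ Subgroup.closure S := by
    intro j
    induction j with
    | zero =>
        intro hj b1 b2 b3
        apply memS <;> try assumption
        · exact isDyadic_natMul 0 hdyh
        · push_cast; linarith
        · push_cast; linarith
        · push_cast; linarith
    | succ j ih =>
        intro hj b1 b2 b3
        have hjm : (j:ℝ) * h + 6 * h ≤ 1 := by
          have : ((j:ℕ):ℝ) + 6 ≤ (m:ℝ) := by exact_mod_cast by omega
          nlinarith
        have hP : (0:ℝ) ≤ (j:ℝ) * h := by positivity
        have hP2 : (j:ℝ) * h ≤ 1 - 6 * h := by linarith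
        have eM : ((j+1:ℕ):ℝ) * h = (j:ℝ) * h + h := by push_cast; ring
        have c2 : -(2*h) + h < (j:ℝ)*h + h := by linarith
        have c3 : ((j:ℝ)*h + h) + 2*h < -(2*h) + 1 := by linarith
        have a1 : 0 < h/2 := by linarith
        have a2 : ((j:ℝ)*h + h) + h/2 < (j:ℝ)*h + 2*h := by linarith
        have a3 : ((j:ℝ)*h + 2*h) + 2*(h/2) < ((j:ℝ)*h + h) + 1 := by linarith
        have b2' : -(2*h) + h < (j:ℝ)*h := by linarith
        have b3' : (j:ℝ)*h + 2*h < -(2*h) + 1 := by linarith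
        have hmul := bump_mul (h := h) (P := (j:ℝ)*h) hh hP hP2 a1 a2 a3 hh b2' b3' hh c2 c3
        have econg : bumpCirc b1 b2 b3 = bumpCirc (M := (j:ℝ)*h + h) hh c2 c3 :=
          bumpCirc_congr eM
        rw [econg, ← hmul]
        apply mul_mem
        · -- the phi factor
          apply memS
          · exact isDyadic_add (isDyadic_natMul j hdyh) hdyh
          · exact isDyadic_half hdyh
          · exact isDyadic_add (isDyadic_natMul j hdyh) (isDyadic_twoMul hdyh)
          · linarith
          · linarith
          · linarith [hjm]
        · exact ih (by omega) hh b2' b3'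
  -- rotation by h is in the subgroup
  have hfive : ((m - 5:ℕ):ℝ) * h = 1 - 5 * h := by
    have : ((m - 5:ℕ):ℝ) = (m:ℝ) - 5 := by
      have : (5:ℕ) ≤ m := by omega
      push_cast [Nat.cast_sub this]
      ring
    rw [this]; nlinarith [hmh]
  have roth_mem : rotC h ∈ Subgroup.closure S := by
    have a2 : (1 - 4*h) + h < 1 - 2*h := by linarith
    have a3 : (1 - 2*h) + 2*h < (1 - 4*h) + 1 := by linarith
    have b2 : -(2*h) + h < 1 - 5*h := by nlinarith
    have b3 : (1 - 5*h) + 2*h < -(2*h) + 1 := by linarith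
    have hlast := bump_last hh hh18 hh a2 a3 hh b2 b3
    rw [← hlast]
    apply mul_mem
    · apply memS
      · refine isDyadic_sub isDyadic_one ?_
        rw [show (4:ℝ)*h = 2*(2*h) by ring]
        exact isDyadic_twoMul (isDyadic_twoMul hdyh)
      · exact hdyh
      · exact isDyadic_sub isDyadic_one (isDyadic_twoMul hdyh)
      · linarith
      · linarith
      · linarith
    · -- this is CF at j = m - 5
      have b2' : -(2*h) + h < ((m-5:ℕ):ℝ) * h := by rw [hfive]; nlinarith
      have b3' : ((m-5:ℕ):ℝ) * h + 2*h < -(2*h) + 1 := by rw [hfive]; linarith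
      have econg : bumpCirc (M := 1 - 5*h) hh b2 b3 = bumpCirc (M := ((m-5:ℕ):ℝ)*h) hh b2' b3' :=
        bumpCirc_congr hfive.symm
      rw [econg]
      exact key (m - 5) (by omega) hh b2' b3'
  -- conclude: a is an integer multiple of h modulo nothing
  have hae : a = ((A0 * 2 ^ (N - n0) : ℤ) : ℝ) * h := by
    rw [ha0, hhdef]
    push_cast
    rw [mul_one_div, div_eq_div_iff (by positivity) (by positivity), mul_assoc, ← pow_add,
      Nat.sub_add_cancel hn0N]
  rw [hae, rotC_zpow]
  exact zpow_mem roth_mem _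


end
end

section
/- Suppose γ ∈ F_{[a,d]} (a < b < c < d dyadic) satisfies b·γ⁻¹ ∈ (a, b]. Then γ can be written as γ = αβ where α ∈ F_{[a,c]} and β ∈ F_{[b,d]}. -/
noncomputable section

namespace Aux15


lemma dyadic_add {x y : ℝ} (hx : IsDyadic x) (hy : IsDyadic y) : IsDyadic (x + y) := by
  obtain ⟨a, n, rfl⟩ := hx; obtain ⟨b, m, rfl⟩ := hy
  refine ⟨a * 2 ^ m + b * 2 ^ n, n + m, ?_⟩
  push_cast
  rw [pow_add]
  field_simp

lemma dyadic_neg {x : ℝ} (hx : IsDyadic x) : IsDyadic (-x) := by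
  obtain ⟨a, n, rfl⟩ := hx; exact ⟨-a, n, by push_cast; ring⟩

lemma dyadic_sub {x y : ℝ} (hx : IsDyadic x) (hy : IsDyadic y) : IsDyadic (x - y) := by
  simpa [sub_eq_add_neg] using dyadic_add hx (dyadic_neg hy)

lemma dyadic_zpow_mul (k : ℤ) {x : ℝ} (hx : IsDyadic x) : IsDyadic ((2 : ℝ) ^ k * x) := by
  obtain ⟨a, n, rfl⟩ := hx
  rcases le_or_gt 0 k with hk | hk
  · lift k to ℕ using hk
    refine ⟨a * 2 ^ k, n, ?_⟩
    push_cast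
    rw [zpow_natCast]
    ring
  · refine ⟨a, n + (-k).toNat, ?_⟩
    have h2 : ((2:ℝ)^k) = 1 / 2 ^ (-k).toNat := by
      rw [← zpow_natCast (2:ℝ) (-k).toNat, Int.toNat_of_nonneg (by omega)]
      simp [zpow_neg]
    rw [h2, pow_add]
    field_simp



variable {n : ℕ} {x : ℕ → ℝ}

lemma xle (hlt : ∀ i, i < n → x i < x (i + 1)) :
    ∀ i j, i ≤ j → j ≤ n → x i ≤ x j := by
  intro i j hij hjn
  induction j with
  | zero => simp_all
  | succ j ih =>
    rcases Nat.lt_or_ge i (j+1) with h | h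
    · have h1 : x i ≤ x j := ih (by omega) (by omega)
      exact h1.trans (hlt j (by omega)).le
    · have : i = j + 1 := by omega
      simp [this]

lemma xlt (hlt : ∀ i, i < n → x i < x (i + 1)) :
    ∀ i j, i < j → j ≤ n → x i < x j := by
  intro i j hij hjn
  have h1 : x i < x (i+1) := hlt i (by omega)
  exact h1.trans_le (xle hlt (i+1) j (by omega) hjn)

lemma no_break (hlt : ∀ i, i < n → x i < x (i + 1)) {u v : ℝ}
    (hu : x 0 ≤ u) (huv : u < v) (hv : v ≤ x n)
    (hfree : ∀ j, j ≤ n → x j ∉ Set.Ioo u v) :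
    ∃ i, i < n ∧ x i ≤ u ∧ v ≤ x (i + 1) := by
  classical
  set P : ℕ → Prop := fun i => x i ≤ u with hP
  have hP0 : P 0 := hu
  set i₀ := Nat.findGreatest P n with hi₀
  have h1 : P i₀ := Nat.findGreatest_spec (Nat.zero_le n) hP0
  have h2 : i₀ ≤ n := Nat.findGreatest_le n
  have h3 : i₀ < n := by
    rcases Nat.lt_or_ge i₀ n with h | h
    · exact h
    · exfalso
      have : i₀ = n := by omega
      rw [this] at h1
      exact absurd (hv.trans h1) (not_le.mpr huv)
  have h4 : ¬ P (i₀ + 1) := Nat.findGreatest_is_greatest (hi₀ ▸ Nat.lt_succ_self i₀) (by omega)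
  have h5 : u < x (i₀ + 1) := not_le.mp h4
  refine ⟨i₀, h3, h1, ?_⟩
  by_contra h6
  exact hfree (i₀+1) (by omega) ⟨h5, not_le.mp h6⟩

lemma point_piece (hlt : ∀ i, i < n → x i < x (i + 1)) {t : ℝ}
    (ht : x 0 ≤ t) (ht2 : t < x n) :
    ∃ i, i < n ∧ x i ≤ t ∧ t < x (i + 1) := by
  classical
  set P : ℕ → Prop := fun i => x i ≤ t with hP
  set i₀ := Nat.findGreatest P n with hi₀
  have h1 : P i₀ := Nat.findGreatest_spec (Nat.zero_le n) ht
  have h2 : i₀ ≤ n := Nat.findGreatest_le n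
  have h3 : i₀ < n := by
    rcases Nat.lt_or_ge i₀ n with h | h
    · exact h
    · exfalso
      have : i₀ = n := by omega
      rw [this] at h1
      exact absurd h1 (not_le.mpr ht2)
  have h4 : ¬ P (i₀ + 1) := Nat.findGreatest_is_greatest (hi₀ ▸ Nat.lt_succ_self i₀) (by omega)
  exact ⟨i₀, h3, h1, not_le.mp h4⟩

lemma piecewise_strictMono {f : ℝ → ℝ}
    (hlt : ∀ i, i < n → x i < x (i + 1))
    (hpc : ∀ i, i < n → ∃ k : ℤ, ∀ t ∈ Set.Icc (x i) (x (i + 1)),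
      f t = f (x i) + (2 : ℝ) ^ k * (t - x i)) :
    ∀ s t, x 0 ≤ s → s < t → t ≤ x n → f s < f t := by
  suffices H : ∀ i, i ≤ n → ∀ s t, x 0 ≤ s → s < t → t ≤ x i → f s < f t by
    intro s t h1 h2 h3; exact H n le_rfl s t h1 h2 h3
  intro i
  induction i with
  | zero => intro _ s t h1 h2 h3; exact absurd ((h1.trans_lt h2).trans_le h3) (lt_irrefl _)
  | succ i ih =>
    intro hin s t h1 h2 h3
    rcases le_or_gt t (x i) with h4 | h4
    · exact ih (by omega) s t h1 h2 h4
    obtain ⟨k, hk⟩ := hpc i (by omega)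
    have hkp : (0:ℝ) < 2 ^ k := zpow_pos (by norm_num) k
    have hft : f t = f (x i) + 2 ^ k * (t - x i) := hk t ⟨h4.le, h3⟩
    rcases le_or_gt (x i) s with h5 | h5
    · have hfs : f s = f (x i) + 2 ^ k * (s - x i) := hk s ⟨h5, h2.le.trans h3⟩
      rw [hfs, hft]
      have : 2 ^ k * (s - x i) < 2 ^ k * (t - x i) := by
        apply mul_lt_mul_of_pos_left (by linarith) hkp
      linarith
    · have hfs : f s < f (x i) := ih (by omega) s (x i) h1 h5 le_rfl
      have : f (x i) ≤ f t := by rw [hft]; nlinarith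
      linarith

lemma fval_dyadic {f : ℝ → ℝ}
    (hlt : ∀ i, i < n → x i < x (i + 1))
    (hpc : ∀ i, i < n → ∃ k : ℤ, ∀ t ∈ Set.Icc (x i) (x (i + 1)),
      f t = f (x i) + (2 : ℝ) ^ k * (t - x i))
    (hdy : ∀ i, i ≤ n → IsDyadic (x i))
    (h0 : IsDyadic (f (x 0))) :
    ∀ i, i ≤ n → IsDyadic (f (x i)) := by
  intro i
  induction i with
  | zero => intro _; exact h0
  | succ i ih =>
    intro hin
    obtain ⟨k, hk⟩ := hpc i (by omega)
    have h1 : f (x (i+1)) = f (x i) + 2 ^ k * (x (i+1) - x i) :=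
      hk _ ⟨(hlt i (by omega)).le, le_rfl⟩
    rw [h1]
    refine dyadic_add (ih (by omega)) (dyadic_zpow_mul k (dyadic_sub (hdy _ hin) (hdy i (by omega))))

lemma finset_to_thompson {p q r s : ℝ} {f : ℝ → ℝ} (S : Finset ℝ)
    (hpq : p < q) (hfp : f p = r) (hfq : f q = s)
    (hp : p ∈ S) (hq : q ∈ S) (hsub : ∀ t ∈ S, t ∈ Set.Icc p q)
    (hdy : ∀ t ∈ S, IsDyadic t)
    (hadj : ∀ u v : ℝ, u ∈ S → v ∈ S → u < v → (∀ w ∈ S, w ≤ u ∨ v ≤ w) →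
      ∃ k : ℤ, ∀ t ∈ Set.Icc u v, f t = f u + (2 : ℝ) ^ k * (t - u)) :
    ThompsonLike p q r s f := by
  classical
  refine ⟨hfp, hfq, S.card - 1, ?_, ?_⟩
  · have : 1 < S.card := Finset.one_lt_card.mpr ⟨p, hp, q, hq, hpq.ne⟩
    omega
  have hcard : 1 < S.card := Finset.one_lt_card.mpr ⟨p, hp, q, hq, hpq.ne⟩
  set N := S.card with hN
  set emb := S.orderEmbOfFin (rfl : S.card = N) with hemb
  refine ⟨fun i => if h : i < N then emb ⟨i, h⟩ else q + i, ?_, ?_, ?_, ?_, ?_⟩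
  · have h0 : (0:ℕ) < N := by omega
    simp only [dif_pos h0]
    have : emb ⟨0, h0⟩ = S.min' ⟨p, hp⟩ := Finset.orderEmbOfFin_zero rfl h0
    rw [this]
    refine le_antisymm (Finset.min'_le _ _ hp) (Finset.le_min' _ _ _ fun y hy => (hsub y hy).1)
  · have h0 : N - 1 < N := by omega
    simp only [dif_pos h0]
    have : emb ⟨N - 1, h0⟩ = S.max' ⟨p, hp⟩ := Finset.orderEmbOfFin_last rfl (by omega)
    rw [this]
    refine le_antisymm (Finset.max'_le _ _ _ fun y hy => (hsub y hy).2) (Finset.le_max' _ _ hq)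
  · intro i hi
    have h1 : i < N := by omega
    have h2 : i + 1 < N := by omega
    simp only [dif_pos h1, dif_pos h2]
    exact emb.strictMono (by exact Fin.mk_lt_mk.mpr (by omega))
  · intro i hi
    have h1 : i < N := by omega
    simp only [dif_pos h1]
    exact hdy _ (Finset.orderEmbOfFin_mem S rfl _)
  · intro i hi
    have h1 : i < N := by omega
    have h2 : i + 1 < N := by omega
    simp only [dif_pos h1, dif_pos h2]
    refine hadj _ _ (Finset.orderEmbOfFin_mem S rfl _) (Finset.orderEmbOfFin_mem S rfl _)
      (emb.strictMono (Fin.mk_lt_mk.mpr (by omega))) ?_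
    intro w hw
    have : w ∈ Set.range emb := by rw [Finset.range_orderEmbOfFin]; exact hw
    obtain ⟨j, rfl⟩ := this
    rcases Nat.lt_or_ge (j : ℕ) (i+1) with h | h
    · exact Or.inl (emb.monotone (Fin.le_def.mpr (by simpa using Nat.lt_succ_iff.mp h)))
    · exact Or.inr (emb.monotone (Fin.le_def.mpr (by simp; omega)))

end Aux15

set_option maxHeartbeats 2000000 in
open Aux15 in
theorem statement15' (a b c d : ℝ) (ha : IsDyadic a) (hb : IsDyadic b)
    (hc : IsDyadic c) (hd : IsDyadic d) (hab : a < b) (hbc : b < c) (hcd : c < d)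
    (g : Equiv.Perm ℝ) (hg : ThompsonLike a d a d g ∧ ∀ x : ℝ, x ∉ Set.Icc a d → g x = x)
    (hbg : g⁻¹ b ∈ Set.Ioc a b) :
    ∃ α β : Equiv.Perm ℝ, (ThompsonLike a c a c α ∧ ∀ x : ℝ, x ∉ Set.Icc a c → α x = x)
      ∧ (ThompsonLike b d b d β ∧ ∀ x : ℝ, x ∉ Set.Icc b d → β x = x)
      ∧ ∀ x : ℝ, g x = β (α x) := by
  classical
  obtain ⟨⟨hga, hgd, n, hn, x, hx0, hxn, hxlt, hxdy, hxpc⟩, hgid⟩ := hg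
  set e := g⁻¹ b with he
  have hge : g e = b := g.apply_symm_apply b
  have hae : a < e := hbg.1
  have heb : e ≤ b := hbg.2
  -- global strict monotonicity of g
  have gmonoOn : ∀ s t, a ≤ s → s < t → t ≤ d → g s < g t := by
    have := piecewise_strictMono hxlt hxpc
    rw [hx0, hxn] at this; exact this
  have glb : ∀ t, a ≤ t → t ≤ d → a ≤ g t := by
    intro t h1 h2
    rcases eq_or_lt_of_le h1 with rfl | h
    · rw [hga]
    · have := gmonoOn a t le_rfl h h2; rw [hga] at this; linarith
  have gub : ∀ t, a ≤ t → t ≤ d → g t ≤ d := by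
    intro t h1 h2
    rcases eq_or_lt_of_le h2 with rfl | h
    · rw [hgd]
    · have := gmonoOn t d h1 h le_rfl; rw [hgd] at this; linarith
  have gmono : StrictMono ⇑g := by
    intro s t hst
    rcases lt_or_ge s a with h1 | h1
    · have hs : g s = s := hgid s (by simp [Set.mem_Icc]; intro h; linarith)
      rcases lt_or_ge t a with h2 | h2
      · rw [hs, hgid t (by simp [Set.mem_Icc]; intro h; linarith)]; exact hst
      · rcases le_or_gt t d with h3 | h3
        · have := glb t h2 h3; rw [hs]; linarith
        · rw [hs, hgid t (by simp [Set.mem_Icc]; intro h; linarith)]; exact hst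
    · rcases le_or_gt t d with h3 | h3
      · exact gmonoOn s t h1 hst h3
      · rcases le_or_gt s d with h4 | h4
        · have := gub s h1 h4; rw [hgid t (by simp [Set.mem_Icc]; intro h; linarith)]; linarith
        · rw [hgid s (by simp [Set.mem_Icc]; intro h; linarith),
              hgid t (by simp [Set.mem_Icc]; intro h; linarith)]; exact hst
  -- e is dyadic
  have hgxdy : ∀ i ≤ n, IsDyadic (g (x i)) :=
    fval_dyadic hxlt hxpc hxdy (by rw [hx0, hga]; exact ha)
  have hedy : IsDyadic e := by
    have hed : e < d := lt_of_le_of_lt heb (hbc.trans hcd)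
    obtain ⟨i0, hi0, hxi0, hxi0'⟩ := point_piece (t := e) hxlt (by rw [hx0]; exact hae.le)
      (by rw [hxn]; exact hed)
    obtain ⟨k0, hk0⟩ := hxpc i0 hi0
    have h1 : b = g (x i0) + 2 ^ k0 * (e - x i0) := by
      rw [← hge]; exact hk0 e ⟨hxi0, hxi0'.le⟩
    have hk0p : (0:ℝ) < 2 ^ k0 := zpow_pos (by norm_num) k0
    have h2 : e = x i0 + 2 ^ (-k0) * (b - g (x i0)) := by
      have h3 : (2:ℝ) ^ (-k0) * 2 ^ k0 = 1 := by
        rw [← zpow_add₀ (by norm_num : (2:ℝ) ≠ 0)]; simp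
      have h4 : (2:ℝ)^(-k0) * (b - g (x i0)) = 2^(-k0) * (2^k0 * (e - x i0)) := by
        rw [h1]; ring
      rw [h4, ← mul_assoc, h3]; ring
    rw [h2]
    exact dyadic_add (hxdy i0 (by omega))
      (dyadic_zpow_mul _ (dyadic_sub hb (hgxdy i0 (by omega))))
  -- slope constants
  set u := c - e with hu_def
  set vv := c - b with hvv_def
  have hu : 0 < u := by simp [hu_def]; linarith
  have hvv0 : 0 < vv := by simp [hvv_def]; linarith
  have hvvu : vv ≤ u := by simp [hu_def, hvv_def]; linarith
  set K := Int.log 2 (vv / u) with hK_def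
  have h2p : ∀ j : ℤ, (0:ℝ) < 2 ^ j := fun j => zpow_pos (by norm_num) j
  have h2K : (0:ℝ) < 2 ^ K := h2p K
  have hK1 : (2:ℝ) ^ K ≤ vv / u := by
    have := Int.zpow_log_le_self (b := 2) (R := ℝ) (by norm_num) (div_pos hvv0 hu)
    simpa using this
  have hK2 : vv / u < 2 ^ (K + 1) := by
    have := Int.lt_zpow_succ_log_self (b := 2) (R := ℝ) (by norm_num) (vv / u)
    simpa using this
  set z := vv / 2 ^ K - u with hz_def
  have hKu : 2 ^ K * u ≤ vv := by
    have := (le_div_iff₀ hu).mp hK1; linarith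
  have hz0 : 0 ≤ z := by
    rw [hz_def, sub_nonneg, le_div_iff₀ h2K]; linarith
  have hzu : z < u := by
    have h1 : vv < 2 ^ (K + 1) * u := by
      have := (div_lt_iff₀ hu).mp hK2; linarith
    have h2 : ((2:ℝ) ^ (K + 1)) = 2 * 2 ^ K := by
      rw [zpow_add_one₀ (by norm_num : (2:ℝ) ≠ 0)]; ring
    rw [hz_def, sub_lt_iff_lt_add, div_lt_iff₀ h2K]
    rw [h2] at h1; linarith [mul_comm ((2:ℝ)^K) u]
  set m := if z = 0 then u / 2 else z with hm_def
  set k₁ : ℤ := if z = 0 then K else K + 1 with hk1_def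
  set k₂ : ℤ := K with hk2_def
  have hm0 : 0 < m := by
    rw [hm_def]; split_ifs with h
    · linarith
    · cases' lt_or_eq_of_le hz0 with h' h'
      · exact h'
      · exact absurd h'.symm h
  have hmu : m < u := by
    rw [hm_def]; split_ifs with h
    · linarith
    · exact hzu
  have hpsi : 2 ^ k₁ * m + 2 ^ k₂ * (u - m) = vv := by
    rw [hm_def, hk1_def, hk2_def]; split_ifs with h
    · have h1 : vv / 2 ^ K = u := by
        have := hz_def ▸ h; linarith [sub_eq_zero.mp (by linarith [hz_def] : vv / 2 ^ K - u = 0)]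
      have h2 : vv = 2 ^ K * u := by
        rw [← h1]; field_simp
      rw [h2]; ring
    · have h1 : vv = 2 ^ K * (z + u) := by
        have : vv / 2 ^ K = z + u := by rw [hz_def]; ring
        rw [← this]; field_simp
      have h2 : ((2:ℝ) ^ (K + 1)) = 2 * 2 ^ K := by
        rw [zpow_add_one₀ (by norm_num : (2:ℝ) ≠ 0)]; ring
      rw [h1, h2]; ring
  have hk1p : (0:ℝ) < 2 ^ k₁ := h2p k₁
  have hk2p : (0:ℝ) < 2 ^ k₂ := h2p k₂
  set w := b + 2 ^ k₁ * m with hw_def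
  have hem_lt_c : e + m < c := by
    have : u = c - e := hu_def
    linarith
  have hbw : b < w := by
    rw [hw_def]; nlinarith
  have hwc : w < c := by
    have h1 : w + 2 ^ k₂ * (u - m) = b + vv := by rw [hw_def]; linarith [hpsi]
    have h2 : (0:ℝ) < 2 ^ k₂ * (u - m) := mul_pos hk2p (by linarith)
    have h3 : b + vv = c := by rw [hvv_def]; ring
    linarith
  -- the function F defining α
  set F : ℝ → ℝ := fun t => if t ≤ e then g t else if t ≤ e + m then b + 2 ^ k₁ * (t - e)
    else if t ≤ c then w + 2 ^ k₂ * (t - (e + m)) else t with hF_def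
  have hFe : ∀ t, t ≤ e → F t = g t := by intro t h; simp only [hF_def, if_pos h]
  have hF1 : ∀ t, e ≤ t → t ≤ e + m → F t = b + 2 ^ k₁ * (t - e) := by
    intro t h1 h2
    by_cases h : t ≤ e
    · have ht : t = e := le_antisymm h h1
      rw [ht]; simp [hF_def, hge]
    · simp only [hF_def, if_neg h, if_pos h2]
  have hF2 : ∀ t, e + m ≤ t → t ≤ c → F t = w + 2 ^ k₂ * (t - (e + m)) := by
    intro t h1 h2
    have h : ¬ t ≤ e := by push_neg; linarith
    by_cases h' : t ≤ e + m
    · have ht : t = e + m := le_antisymm h' h1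
      rw [ht, hF1 (e+m) (by linarith) le_rfl, hw_def]; ring
    · simp only [hF_def, if_neg h, if_neg h', if_pos h2]
  have hFcc : F c = c := by
    rw [hF2 c hem_lt_c.le le_rfl]
    have hc1 : c - (e + m) = u - m := by rw [hu_def]; ring
    rw [hc1, hw_def]
    have hvv' : vv = c - b := hvv_def
    linarith [hpsi]
  have hFc : ∀ t, c ≤ t → F t = t := by
    intro t h1
    rcases eq_or_lt_of_le h1 with h | h
    · rw [← h, hFcc]
    · have h2 : ¬ t ≤ e := by push_neg; linarith
      have h3 : ¬ t ≤ e + m := by push_neg; linarith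
      have h4 : ¬ t ≤ c := by push_neg; linarith
      simp only [hF_def, if_neg h2, if_neg h3, if_neg h4]
  have hFee : F e = b := by rw [hFe e le_rfl, hge]
  have hFw : F (e + m) = w := by rw [hF1 (e+m) (by linarith) le_rfl, hw_def]; ring
  -- strict monotonicity of F
  have Fmono : StrictMono F := by
    intro s t hst
    rcases le_or_gt t e with h1 | h1
    · rw [hFe s (hst.le.trans h1), hFe t h1]; exact gmono hst
    rcases le_or_gt s e with h2 | h2
    · have hFs : F s ≤ b := by
        rw [hFe s h2, ← hge]; exact gmono.monotone h2
      rcases le_or_gt t (e + m) with h3 | h3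
      · rw [hF1 t h1.le h3]
        have : 0 < 2 ^ k₁ * (t - e) := mul_pos hk1p (by linarith)
        linarith
      rcases le_or_gt t c with h4 | h4
      · rw [hF2 t h3.le h4]
        have : 0 ≤ 2 ^ k₂ * (t - (e + m)) := mul_nonneg hk2p.le (by linarith)
        linarith
      · rw [hFc t h4.le]; linarith
    rcases le_or_gt t (e + m) with h3 | h3
    · rw [hF1 s h2.le (hst.le.trans h3), hF1 t h1.le h3]
      have := mul_lt_mul_of_pos_left (show s - e < t - e by linarith) hk1p
      linarith
    rcases le_or_gt s (e + m) with h4 | h4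
    · have hFs : F s ≤ w := by
        rw [hF1 s h2.le h4, hw_def]
        have := mul_le_mul_of_nonneg_left (show s - e ≤ m by linarith) hk1p.le
        linarith
      rcases le_or_gt t c with h5 | h5
      · rw [hF2 t h3.le h5]
        have : 0 < 2 ^ k₂ * (t - (e + m)) := mul_pos hk2p (by linarith)
        linarith
      · rw [hFc t h5.le]; linarith
    rcases le_or_gt t c with h5 | h5
    · rw [hF2 s h4.le (hst.le.trans h5), hF2 t (by linarith) h5]
      have := mul_lt_mul_of_pos_left (show s - (e+m) < t - (e+m) by linarith) hk2p
      linarith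
    rcases le_or_gt s c with h6 | h6
    · have hFs : F s ≤ c := by
        rw [← hFcc, hF2 s h4.le h6, hF2 c hem_lt_c.le le_rfl]
        have := mul_le_mul_of_nonneg_left (show s - (e+m) ≤ c - (e+m) by linarith) hk2p.le
        linarith
      rw [hFc t h5.le]; linarith
    · rw [hFc s h6.le, hFc t h5.le]; exact hst
  -- inverse formulas
  have hzpow_cancel : ∀ j : ℤ, (2:ℝ) ^ j * 2 ^ (-j) = 1 := by
    intro j; rw [← zpow_add₀ (by norm_num : (2:ℝ) ≠ 0)]; simp
  have hinv0 : ∀ y, y ≤ b → g⁻¹ y ≤ e ∧ F (g⁻¹ y) = y := by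
    intro y h1
    have h2 : g⁻¹ y ≤ e := by
      have h3 : g (g⁻¹ y) ≤ g e := by
        rw [Equiv.Perm.coe_inv, Equiv.apply_symm_apply, hge]; exact h1
      exact gmono.le_iff_le.mp h3
    exact ⟨h2, by rw [hFe _ h2, Equiv.Perm.coe_inv, Equiv.apply_symm_apply]⟩
  have hinv1 : ∀ y, b ≤ y → y ≤ w → F (e + 2 ^ (-k₁) * (y - b)) = y := by
    intro y h1 h2
    have hp : (0:ℝ) < 2 ^ (-k₁) := h2p _
    have hbd1 : e ≤ e + 2 ^ (-k₁) * (y - b) := by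
      have : 0 ≤ 2 ^ (-k₁) * (y - b) := mul_nonneg hp.le (by linarith)
      linarith
    have hbd2 : e + 2 ^ (-k₁) * (y - b) ≤ e + m := by
      have h3 : 2 ^ (-k₁) * (y - b) ≤ 2 ^ (-k₁) * (2 ^ k₁ * m) :=
        mul_le_mul_of_nonneg_left (by rw [hw_def] at h2; linarith) hp.le
      have h4 : (2:ℝ) ^ (-k₁) * (2 ^ k₁ * m) = m := by
        rw [← mul_assoc, mul_comm ((2:ℝ)^(-k₁)) _, hzpow_cancel]; ring
      linarith [h3.trans_eq h4]
    rw [hF1 _ hbd1 hbd2]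
    have h5 : (2:ℝ) ^ k₁ * (e + 2 ^ (-k₁) * (y - b) - e) = (2 ^ k₁ * 2 ^ (-k₁)) * (y - b) := by ring
    rw [h5, hzpow_cancel]; ring
  have hinv2 : ∀ y, w ≤ y → y ≤ c → F ((e + m) + 2 ^ (-k₂) * (y - w)) = y := by
    intro y h1 h2
    have hp : (0:ℝ) < 2 ^ (-k₂) := h2p _
    have hcw : c = w + 2 ^ k₂ * (u - m) := by
      have hvv' : vv = c - b := hvv_def
      rw [hw_def]; linarith [hpsi]
    have hbd1 : e + m ≤ (e + m) + 2 ^ (-k₂) * (y - w) := by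
      have : 0 ≤ 2 ^ (-k₂) * (y - w) := mul_nonneg hp.le (by linarith)
      linarith
    have hbd2 : (e + m) + 2 ^ (-k₂) * (y - w) ≤ c := by
      have h3 : 2 ^ (-k₂) * (y - w) ≤ 2 ^ (-k₂) * (2 ^ k₂ * (u - m)) :=
        mul_le_mul_of_nonneg_left (by rw [hcw] at h2; linarith) hp.le
      have h4 : (2:ℝ) ^ (-k₂) * (2 ^ k₂ * (u - m)) = u - m := by
        rw [← mul_assoc, mul_comm ((2:ℝ)^(-k₂)) _, hzpow_cancel]; ring
      have h5 : e + m + (u - m) = c := by rw [hu_def]; ring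
      linarith [h3.trans_eq h4]
    rw [hF2 _ hbd1 hbd2]
    have h5 : (2:ℝ) ^ k₂ * ((e + m) + 2 ^ (-k₂) * (y - w) - (e + m)) = (2 ^ k₂ * 2 ^ (-k₂)) * (y - w) := by
      ring
    rw [h5, hzpow_cancel]; ring
  have Fsurj : Function.Surjective F := by
    intro y
    rcases le_or_gt y b with h1 | h1
    · exact ⟨g⁻¹ y, (hinv0 y h1).2⟩
    rcases le_or_gt y w with h2 | h2
    · exact ⟨_, hinv1 y h1.le h2⟩
    rcases le_or_gt y c with h3 | h3
    · exact ⟨_, hinv2 y h2.le h3⟩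
    · exact ⟨y, hFc y h3.le⟩
  set α : Equiv.Perm ℝ := Equiv.ofBijective F ⟨Fmono.injective, Fsurj⟩ with hα_def
  have hαF : ∀ t, α t = F t := fun t => rfl
  have hsymm : ∀ y t, F t = y → α.symm y = t := by
    intro y t h
    apply α.injective
    rw [Equiv.apply_symm_apply, hαF, h]
  -- dyadic facts
  have hudy : IsDyadic u := by rw [hu_def]; exact dyadic_sub hc hedy
  have hvvdy : IsDyadic vv := by rw [hvv_def]; exact dyadic_sub hc hb
  have hzdy : IsDyadic z := by
    rw [hz_def]
    have : vv / 2 ^ K = 2 ^ (-K) * vv := by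
      rw [zpow_neg]; field_simp
    rw [this]
    exact dyadic_sub (dyadic_zpow_mul _ hvvdy) hudy
  have hmdy : IsDyadic m := by
    rw [hm_def]; split_ifs
    · have h12 : u / 2 = 2 ^ (-1 : ℤ) * u := by
        rw [zpow_neg, zpow_one]; ring
      rw [h12]; exact dyadic_zpow_mul _ hudy
    · exact hzdy
  have hemdy : IsDyadic (e + m) := dyadic_add hedy hmdy
  have hwdy : IsDyadic w := by
    rw [hw_def]; exact dyadic_add hb (dyadic_zpow_mul _ hmdy)
  -- breakpoint finsets
  set Sg : Finset ℝ := (Finset.range (n+1)).image x with hSg_def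
  have hmemSg : ∀ j ≤ n, x j ∈ Sg := by
    intro j hj
    rw [hSg_def]
    exact Finset.mem_image.mpr ⟨j, Finset.mem_range.mpr (by omega), rfl⟩
  have hSg_elim : ∀ t ∈ Sg, ∃ j ≤ n, x j = t := by
    intro t ht
    rw [hSg_def] at ht
    obtain ⟨j, hj, rfl⟩ := Finset.mem_image.mp ht
    exact ⟨j, Nat.lt_succ_iff.mp (Finset.mem_range.mp hj), rfl⟩
  -- α is Thompson-like on [a,c]
  have hαTL : ThompsonLike a c a c F := by
    set Sα : Finset ℝ := (Sg.filter (· ≤ e)) ∪ {e, e + m, c} with hSα_def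
    have hmem_e : e ∈ Sα := Finset.mem_union_right _ (Finset.mem_insert_self _ _)
    have hmem_em : e + m ∈ Sα :=
      Finset.mem_union_right _ (Finset.mem_insert_of_mem (Finset.mem_insert_self _ _))
    have hmem_c : c ∈ Sα :=
      Finset.mem_union_right _ (Finset.mem_insert_of_mem (Finset.mem_insert_of_mem
        (Finset.mem_singleton_self _)))
    apply finset_to_thompson Sα (by linarith) (by rw [hFe a hae.le, hga]) hFcc
    · rw [hSα_def]
      apply Finset.mem_union_left
      rw [Finset.mem_filter]
      exact ⟨hx0 ▸ hmemSg 0 (by omega), hae.le⟩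
    · exact hmem_c
    · intro t ht
      rw [hSα_def, Finset.mem_union] at ht
      rcases ht with ht | ht
      · rw [Finset.mem_filter] at ht
        obtain ⟨j, hj, rfl⟩ := hSg_elim t ht.1
        constructor
        · rw [← hx0]; exact xle hxlt 0 j (by omega) hj
        · exact le_trans ht.2 (by linarith)
      · simp only [Finset.mem_insert, Finset.mem_singleton] at ht
        rcases ht with rfl | rfl | rfl
        · exact ⟨hae.le, by linarith⟩
        · exact ⟨by linarith, by linarith⟩
        · exact ⟨by linarith, le_rfl⟩
    · intro t ht
      rw [hSα_def, Finset.mem_union] at ht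
      rcases ht with ht | ht
      · rw [Finset.mem_filter] at ht
        obtain ⟨j, hj, rfl⟩ := hSg_elim t ht.1
        exact hxdy j hj
      · simp only [Finset.mem_insert, Finset.mem_singleton] at ht
        rcases ht with rfl | rfl | rfl
        · exact hedy
        · exact hemdy
        · exact hc
    · intro u' v' hu' hv' hlt' hnear
      have hsubα : ∀ t ∈ Sα, a ≤ t ∧ t ≤ c := by
        intro t ht
        rw [hSα_def, Finset.mem_union] at ht
        rcases ht with ht | ht
        · rw [Finset.mem_filter] at ht
          obtain ⟨j, hj, rfl⟩ := hSg_elim t ht.1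
          exact ⟨by rw [← hx0]; exact xle hxlt 0 j (by omega) hj, le_trans ht.2 (by linarith)⟩
        · simp only [Finset.mem_insert, Finset.mem_singleton] at ht
          rcases ht with rfl | rfl | rfl
          · exact ⟨hae.le, by linarith⟩
          · exact ⟨by linarith, by linarith⟩
          · exact ⟨by linarith, le_rfl⟩
      rcases hnear e hmem_e with hE | hE
      · -- e ≤ u' : right part
        rcases hnear (e + m) hmem_em with hM | hM
        · -- e + m ≤ u'
          refine ⟨k₂, fun t ht => ?_⟩
          have hvc : v' ≤ c := (hsubα v' hv').2
          rw [hF2 t (hM.trans ht.1) (ht.2.trans hvc), hF2 u' hM (by linarith [(hsubα u' hu').2])]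
          ring
        · -- v' ≤ e + m
          refine ⟨k₁, fun t ht => ?_⟩
          rw [hF1 t (hE.trans ht.1) (ht.2.trans hM), hF1 u' hE (hlt'.le.trans hM)]
          ring
      · -- v' ≤ e : g-part
        have hua : a ≤ u' := (hsubα u' hu').1
        have hfree : ∀ j, j ≤ n → x j ∉ Set.Ioo u' v' := by
          intro j hj hmem
          have hxje : x j ≤ e := hmem.2.le.trans hE
          have hxjS : x j ∈ Sα := by
            rw [hSα_def]
            exact Finset.mem_union_left _ (Finset.mem_filter.mpr ⟨hmemSg j hj, hxje⟩)
          rcases hnear (x j) hxjS with h | h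
          · exact absurd hmem.1 (not_lt.mpr h)
          · exact absurd hmem.2 (not_lt.mpr h)
        obtain ⟨i, hi, hiu, hiv⟩ := no_break hxlt (by rw [hx0]; exact hua) hlt'
          (by rw [hxn]; linarith) hfree
        obtain ⟨k, hk⟩ := hxpc i hi
        refine ⟨k, fun t ht => ?_⟩
        rw [hFe t (ht.2.trans hE), hFe u' (hlt'.le.trans hE),
          hk t ⟨hiu.trans ht.1, ht.2.trans hiv⟩, hk u' ⟨hiu, hlt'.le.trans hiv⟩]
        ring
  have hαid : ∀ t, t ∉ Set.Icc a c → F t = t := by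
    intro t ht
    rw [Set.mem_Icc, not_and_or, not_le, not_le] at ht
    rcases ht with h | h
    · rw [hFe t (by linarith)]
      exact hgid t (by rw [Set.mem_Icc, not_and_or, not_le]; exact Or.inl h)
    · exact hFc t h.le
  -- the second factor β
  set β : Equiv.Perm ℝ := α.symm.trans g with hβ_def
  have hβfun : ∀ y, β y = g (α.symm y) := fun y => rfl
  have hFsymm : ∀ y, F (α.symm y) = y := by
    intro y; rw [← hαF, Equiv.apply_symm_apply]
  have hcw : c = w + 2 ^ k₂ * (u - m) := by
    have hvv' : vv = c - b := hvv_def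
    rw [hw_def]; linarith [hpsi]
  have hβid : ∀ y, y ∉ Set.Icc b d → β y = y := by
    intro y hy
    rw [Set.mem_Icc, not_and_or, not_le, not_le] at hy
    rcases hy with h | h
    · have h1 : α.symm y < e := by
        apply Fmono.lt_iff_lt.mp
        rw [hFee, hFsymm]; exact h
      rw [hβfun, show g (α.symm y) = F (α.symm y) from (hFe _ h1.le).symm, hFsymm]
    · have h1 : α.symm y = y := hsymm y y (hFc y (by linarith))
      rw [hβfun, h1]
      exact hgid y (by rw [Set.mem_Icc, not_and_or]; right; exact not_le.mpr h)
  have hβb : β b = b := by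
    rw [hβfun, hsymm b e hFee, hge]
  have hβd : β d = d := by
    rw [hβfun, hsymm d d (hFc d (by linarith)), hgd]
  -- Thompson-likeness of β on [b,d]
  have hβTL : ThompsonLike b d b d ⇑β := by
    set Sβ : Finset ℝ := ((Sg.filter (fun t => e < t ∧ t < c)).image F ∪
      Sg.filter (fun t => c < t)) ∪ {b, w, c, d} with hSβ_def
    have hmem_b : b ∈ Sβ := Finset.mem_union_right _ (Finset.mem_insert_self _ _)
    have hmem_w : w ∈ Sβ :=
      Finset.mem_union_right _ (Finset.mem_insert_of_mem (Finset.mem_insert_self _ _))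
    have hmem_c : c ∈ Sβ := Finset.mem_union_right _ (Finset.mem_insert_of_mem
      (Finset.mem_insert_of_mem (Finset.mem_insert_self _ _)))
    have hmem_d : d ∈ Sβ := Finset.mem_union_right _ (Finset.mem_insert_of_mem
      (Finset.mem_insert_of_mem (Finset.mem_insert_of_mem (Finset.mem_singleton_self _))))
    have hsubβ : ∀ t ∈ Sβ, b ≤ t ∧ t ≤ d := by
      intro t ht
      rw [hSβ_def, Finset.mem_union, Finset.mem_union] at ht
      rcases ht with (ht | ht) | ht
      · obtain ⟨s', hs', rfl⟩ := Finset.mem_image.mp ht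
        rw [Finset.mem_filter] at hs'
        obtain ⟨hs1, hs2, hs3⟩ := hs'
        constructor
        · rw [← hFee]; exact (Fmono hs2).le
        · have hlt := Fmono hs3
          rw [hFcc] at hlt
          linarith
      · rw [Finset.mem_filter] at ht
        obtain ⟨j, hj, rfl⟩ := hSg_elim _ ht.1
        refine ⟨by linarith [ht.2], ?_⟩
        rw [← hxn]; exact xle hxlt j n hj le_rfl
      · simp only [Finset.mem_insert, Finset.mem_singleton] at ht
        rcases ht with rfl | rfl | rfl | rfl
        · exact ⟨le_rfl, by linarith⟩
        · exact ⟨hbw.le, by linarith⟩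
        · exact ⟨by linarith, by linarith⟩
        · exact ⟨by linarith, le_rfl⟩
    have hdyβ : ∀ t ∈ Sβ, IsDyadic t := by
      intro t ht
      rw [hSβ_def, Finset.mem_union, Finset.mem_union] at ht
      rcases ht with (ht | ht) | ht
      · obtain ⟨s', hs', rfl⟩ := Finset.mem_image.mp ht
        rw [Finset.mem_filter] at hs'
        obtain ⟨hs1, hs2, hs3⟩ := hs'
        obtain ⟨j, hj, rfl⟩ := hSg_elim _ hs1
        rcases le_or_gt (x j) (e + m) with h' | h'
        · rw [hF1 _ hs2.le h']
          exact dyadic_add hb (dyadic_zpow_mul _ (dyadic_sub (hxdy j hj) hedy))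
        · rw [hF2 _ h'.le hs3.le]
          exact dyadic_add hwdy (dyadic_zpow_mul _ (dyadic_sub (hxdy j hj) hemdy))
      · rw [Finset.mem_filter] at ht
        obtain ⟨j, hj, rfl⟩ := hSg_elim _ ht.1
        exact hxdy j hj
      · simp only [Finset.mem_insert, Finset.mem_singleton] at ht
        rcases ht with rfl | rfl | rfl | rfl
        exacts [hb, hwdy, hc, hd]
    apply finset_to_thompson Sβ (by linarith) hβb hβd hmem_b hmem_d
      (fun t ht => Set.mem_Icc.mpr (hsubβ t ht)) hdyβ
    intro u' v' hu' hv' hlt' hnear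
    have hub : b ≤ u' := (hsubβ u' hu').1
    have hvd : v' ≤ d := (hsubβ v' hv').2
    have hsplit : ∀ k : ℤ, (2:ℝ) ^ (k - k₂) = 2 ^ k * 2 ^ (-k₂) := by
      intro k; rw [← zpow_add₀ (by norm_num : (2:ℝ) ≠ 0), sub_eq_add_neg]
    have hsplit1 : ∀ k : ℤ, (2:ℝ) ^ (k - k₁) = 2 ^ k * 2 ^ (-k₁) := by
      intro k; rw [← zpow_add₀ (by norm_num : (2:ℝ) ≠ 0), sub_eq_add_neg]
    rcases hnear c hmem_c with hC | hC
    · -- c ≤ u' : region [c,d], β = g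
      have hfree : ∀ j, j ≤ n → x j ∉ Set.Ioo u' v' := by
        intro j hj hmem
        have hxjS : x j ∈ Sβ := by
          rw [hSβ_def]
          refine Finset.mem_union_left _ (Finset.mem_union_right _ ?_)
          exact Finset.mem_filter.mpr ⟨hmemSg j hj, lt_of_le_of_lt hC hmem.1⟩
        rcases hnear (x j) hxjS with h | h
        · exact absurd hmem.1 (not_lt.mpr h)
        · exact absurd hmem.2 (not_lt.mpr h)
      obtain ⟨i, hi, hiu, hiv⟩ := no_break hxlt (by rw [hx0]; linarith) hlt'
        (by rw [hxn]; exact hvd) hfree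
      obtain ⟨k, hk⟩ := hxpc i hi
      refine ⟨k, fun t ht => ?_⟩
      have hst : ∀ s', c ≤ s' → β s' = g s' := by
        intro s' hs'
        rw [hβfun, hsymm s' s' (hFc s' hs')]
      rw [hst t (hC.trans ht.1), hst u' hC,
        hk t ⟨hiu.trans ht.1, ht.2.trans hiv⟩, hk u' ⟨hiu, hlt'.le.trans hiv⟩]
      ring
    · -- v' ≤ c
      rcases hnear w hmem_w with hW | hW
      · -- w ≤ u' : region [w,c]
        have hp2 : (0:ℝ) < 2 ^ (-k₂) := h2p _
        have hrsymm : ∀ y, w ≤ y → y ≤ c → α.symm y = (e + m) + 2 ^ (-k₂) * (y - w) :=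
          fun y h1 h2 => hsymm y _ (hinv2 y h1 h2)
        set r2 : ℝ → ℝ := fun y => (e + m) + 2 ^ (-k₂) * (y - w) with hr2_def
        have hr2mono : ∀ y1 y2, y1 < y2 → r2 y1 < r2 y2 := by
          intro y1 y2 h
          simp only [hr2_def]
          have := mul_lt_mul_of_pos_left (show y1 - w < y2 - w by linarith) hp2
          linarith
        have hr2mono' : ∀ y1 y2, y1 ≤ y2 → r2 y1 ≤ r2 y2 := by
          intro y1 y2 h
          rcases eq_or_lt_of_le h with rfl | h'
          · exact le_rfl
          · exact (hr2mono _ _ h').le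
        have hr2lb : ∀ y, w ≤ y → e + m ≤ r2 y := by
          intro y h
          simp only [hr2_def]
          have : 0 ≤ 2 ^ (-k₂) * (y - w) := mul_nonneg hp2.le (by linarith)
          linarith
        have hr2ub : ∀ y, y ≤ c → r2 y ≤ c := by
          intro y h
          simp only [hr2_def]
          have h3 : 2 ^ (-k₂) * (y - w) ≤ 2 ^ (-k₂) * (2 ^ k₂ * (u - m)) :=
            mul_le_mul_of_nonneg_left (by rw [hcw] at h; linarith) hp2.le
          have h4 : (2:ℝ) ^ (-k₂) * (2 ^ k₂ * (u - m)) = u - m := by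
            rw [← mul_assoc, mul_comm ((2:ℝ)^(-k₂)) _, hzpow_cancel]; ring
          have h5 : e + m + (u - m) = c := by rw [hu_def]; ring
          linarith [h3.trans_eq h4]
        have hr2inv : ∀ y, 2 ^ k₂ * (r2 y - (e + m)) = y - w := by
          intro y
          simp only [hr2_def]
          have : (2:ℝ) ^ k₂ * (2 ^ (-k₂) * (y - w)) = y - w := by
            rw [← mul_assoc, hzpow_cancel]; ring
          linarith [this]
        have hvc : v' ≤ c := hC
        have hfree : ∀ j, j ≤ n → x j ∉ Set.Ioo (r2 u') (r2 v') := by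
          intro j hj hmem
          have h5 : e + m < x j := lt_of_le_of_lt (hr2lb u' hW) hmem.1
          have h6 : x j < c := lt_of_lt_of_le hmem.2 (hr2ub v' hvc)
          have hxjS : F (x j) ∈ Sβ := by
            rw [hSβ_def]
            refine Finset.mem_union_left _ (Finset.mem_union_left _ ?_)
            exact Finset.mem_image.mpr ⟨x j, Finset.mem_filter.mpr
              ⟨hmemSg j hj, by linarith, h6⟩, rfl⟩
          have hFxj : F (x j) = w + 2 ^ k₂ * (x j - (e + m)) := hF2 _ h5.le h6.le
          have hlb : u' < F (x j) := by
            have := mul_lt_mul_of_pos_left (show r2 u' - (e+m) < x j - (e+m) by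
              linarith [hmem.1]) hk2p
            have h7 := hr2inv u'
            rw [hFxj]; linarith
          have hub' : F (x j) < v' := by
            have := mul_lt_mul_of_pos_left (show x j - (e+m) < r2 v' - (e+m) by
              linarith [hmem.2]) hk2p
            have h7 := hr2inv v'
            rw [hFxj]; linarith
          rcases hnear (F (x j)) hxjS with h | h
          · exact absurd hlb (not_lt.mpr h)
          · exact absurd hub' (not_lt.mpr h)
        obtain ⟨i, hi, hiu, hiv⟩ := no_break hxlt
          (by rw [hx0]; linarith [hr2lb u' hW]) (hr2mono _ _ hlt')
          (by rw [hxn]; linarith [hr2ub v' hvc]) hfree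
        obtain ⟨k, hk⟩ := hxpc i hi
        refine ⟨k - k₂, fun t ht => ?_⟩
        have hαt : α.symm t = r2 t := hrsymm t (hW.trans ht.1) (ht.2.trans hvc)
        have hαu : α.symm u' = r2 u' := hrsymm u' hW (hlt'.le.trans hvc)
        rw [hβfun, hβfun, hαt, hαu,
          hk (r2 t) ⟨hiu.trans (hr2mono' _ _ ht.1), (hr2mono' _ _ ht.2).trans hiv⟩,
          hk (r2 u') ⟨hiu, (hr2mono' _ _ hlt'.le).trans hiv⟩, hsplit k]
        simp only [hr2_def]
        ring
      · -- v' ≤ w : region [b,w]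
        have hp1 : (0:ℝ) < 2 ^ (-k₁) := h2p _
        have hrsymm : ∀ y, b ≤ y → y ≤ w → α.symm y = e + 2 ^ (-k₁) * (y - b) :=
          fun y h1 h2 => hsymm y _ (hinv1 y h1 h2)
        set r1 : ℝ → ℝ := fun y => e + 2 ^ (-k₁) * (y - b) with hr1_def
        have hr1mono : ∀ y1 y2, y1 < y2 → r1 y1 < r1 y2 := by
          intro y1 y2 h
          simp only [hr1_def]
          have := mul_lt_mul_of_pos_left (show y1 - b < y2 - b by linarith) hp1
          linarith
        have hr1mono' : ∀ y1 y2, y1 ≤ y2 → r1 y1 ≤ r1 y2 := by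
          intro y1 y2 h
          rcases eq_or_lt_of_le h with rfl | h'
          · exact le_rfl
          · exact (hr1mono _ _ h').le
        have hr1lb : ∀ y, b ≤ y → e ≤ r1 y := by
          intro y h
          simp only [hr1_def]
          have : 0 ≤ 2 ^ (-k₁) * (y - b) := mul_nonneg hp1.le (by linarith)
          linarith
        have hr1ub : ∀ y, y ≤ w → r1 y ≤ e + m := by
          intro y h
          simp only [hr1_def]
          have h3 : 2 ^ (-k₁) * (y - b) ≤ 2 ^ (-k₁) * (2 ^ k₁ * m) :=
            mul_le_mul_of_nonneg_left (by rw [hw_def] at h; linarith) hp1.le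
          have h4 : (2:ℝ) ^ (-k₁) * (2 ^ k₁ * m) = m := by
            rw [← mul_assoc, mul_comm ((2:ℝ)^(-k₁)) _, hzpow_cancel]; ring
          linarith [h3.trans_eq h4]
        have hr1inv : ∀ y, 2 ^ k₁ * (r1 y - e) = y - b := by
          intro y
          simp only [hr1_def]
          have : (2:ℝ) ^ k₁ * (2 ^ (-k₁) * (y - b)) = y - b := by
            rw [← mul_assoc, hzpow_cancel]; ring
          linarith [this]
        have hfree : ∀ j, j ≤ n → x j ∉ Set.Ioo (r1 u') (r1 v') := by
          intro j hj hmem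
          have h5 : e < x j := lt_of_le_of_lt (hr1lb u' hub) hmem.1
          have h6 : x j ≤ e + m := le_trans hmem.2.le (hr1ub v' hW)
          have hxjS : F (x j) ∈ Sβ := by
            rw [hSβ_def]
            refine Finset.mem_union_left _ (Finset.mem_union_left _ ?_)
            exact Finset.mem_image.mpr ⟨x j, Finset.mem_filter.mpr
              ⟨hmemSg j hj, h5, by linarith⟩, rfl⟩
          have hFxj : F (x j) = b + 2 ^ k₁ * (x j - e) := hF1 _ h5.le h6
          have hlb : u' < F (x j) := by
            have := mul_lt_mul_of_pos_left (show r1 u' - e < x j - e by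
              linarith [hmem.1]) hk1p
            have h7 := hr1inv u'
            rw [hFxj]; linarith
          have hub' : F (x j) < v' := by
            have := mul_lt_mul_of_pos_left (show x j - e < r1 v' - e by
              linarith [hmem.2]) hk1p
            have h7 := hr1inv v'
            rw [hFxj]; linarith
          rcases hnear (F (x j)) hxjS with h | h
          · exact absurd hlb (not_lt.mpr h)
          · exact absurd hub' (not_lt.mpr h)
        obtain ⟨i, hi, hiu, hiv⟩ := no_break hxlt
          (by rw [hx0]; linarith [hr1lb u' hub]) (hr1mono _ _ hlt')
          (by rw [hxn]; linarith [hr1ub v' hW]) hfree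
        obtain ⟨k, hk⟩ := hxpc i hi
        refine ⟨k - k₁, fun t ht => ?_⟩
        have hαt : α.symm t = r1 t := hrsymm t (hub.trans ht.1) (ht.2.trans hW)
        have hαu : α.symm u' = r1 u' := hrsymm u' hub (hlt'.le.trans hW)
        rw [hβfun, hβfun, hαt, hαu,
          hk (r1 t) ⟨hiu.trans (hr1mono' _ _ ht.1), (hr1mono' _ _ ht.2).trans hiv⟩,
          hk (r1 u') ⟨hiu, (hr1mono' _ _ hlt'.le).trans hiv⟩, hsplit1 k]
        simp only [hr1_def]
        ring
  refine ⟨α, β, ⟨hαTL, fun t ht => hαid t ht⟩, ⟨hβTL, fun y hy => hβid y hy⟩, ?_⟩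
  intro t
  rw [hβfun, Equiv.symm_apply_apply]


theorem statement15 (a b c d : ℝ) (ha : IsDyadic a) (hb : IsDyadic b)
    (hc : IsDyadic c) (hd : IsDyadic d) (hab : a < b) (hbc : b < c) (hcd : c < d)
    (g : Equiv.Perm ℝ) (hg : InF a d g) (hbg : g⁻¹ b ∈ Set.Ioc a b) :
    ∃ α β : Equiv.Perm ℝ, InF a c α ∧ InF b d β ∧ ∀ x : ℝ, g x = β (α x) := by
  obtain ⟨α, β, h1, h2, h3⟩ := statement15' a b c d ha hb hc hd hab hbc hcd g hg hbg
  exact ⟨α, β, h1, h2, h3⟩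

end
end

section
/- Let α ∈ T be the order-2 rotation x ↦ x + 1/2. If a subgroup G ≤ T contains the pointwise stabiliser T_{[0,1]} of the point 0 (a copy of F) and contains α, then G = T. -/
noncomputable section

-- ===== auxiliary lemmas =====

namespace Statement19Aux

lemma isDyadic_int (a : ℤ) : IsDyadic (a : ℝ) := ⟨a, 0, by simp⟩

lemma isDyadic_zero : IsDyadic 0 := ⟨0, 0, by simp⟩

lemma dyadic_add {x y : ℝ} (hx : IsDyadic x) (hy : IsDyadic y) : IsDyadic (x + y) := by
  obtain ⟨a, n, rfl⟩ := hx
  obtain ⟨b, m, rfl⟩ := hy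
  refine ⟨a * 2 ^ m + b * 2 ^ n, n + m, ?_⟩
  push_cast
  rw [pow_add]
  field_simp

lemma dyadic_neg {x : ℝ} (hx : IsDyadic x) : IsDyadic (-x) := by
  obtain ⟨a, n, rfl⟩ := hx
  exact ⟨-a, n, by push_cast; ring⟩

lemma dyadic_sub {x y : ℝ} (hx : IsDyadic x) (hy : IsDyadic y) : IsDyadic (x - y) := by
  simpa [sub_eq_add_neg] using dyadic_add hx (dyadic_neg hy)

lemma dyadic_zpow_mul {x : ℝ} (k : ℤ) (hx : IsDyadic x) : IsDyadic ((2:ℝ) ^ k * x) := by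
  obtain ⟨a, n, rfl⟩ := hx
  rcases le_or_gt 0 k with hk | hk
  · lift k to ℕ using hk
    exact ⟨a * 2 ^ k, n, by push_cast [zpow_natCast]; field_simp⟩
  · refine ⟨a, n + (-k).toNat, ?_⟩
    have h2 : (2:ℝ) ^ k = ((2:ℝ) ^ ((-k).toNat) )⁻¹ := by
      rw [← zpow_natCast, Int.toNat_of_nonneg (by omega), ← zpow_neg]
      norm_num
    rw [h2]
    push_cast
    rw [pow_add]
    field_simp

/-- `x * 2^N` is an integer. -/
def D2 (N : ℕ) (x : ℝ) : Prop := ∃ c : ℤ, x * 2 ^ N = c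

lemma dyadic_exists_d2 {x : ℝ} (hx : IsDyadic x) : ∃ N, D2 N x := by
  obtain ⟨a, n, rfl⟩ := hx
  exact ⟨n, a, by field_simp⟩

lemma d2_mono {N M : ℕ} {x : ℝ} (h : D2 N x) (hNM : N ≤ M) : D2 M x := by
  obtain ⟨c, hc⟩ := h
  refine ⟨c * 2 ^ (M - N), ?_⟩
  have : (2:ℝ) ^ M = 2 ^ N * 2 ^ (M - N) := by rw [← pow_add]; congr 1; omega
  rw [this, ← mul_assoc, hc]; push_cast; ring

lemma isDyadic_nat_div_pow (r : ℕ) (M : ℕ) : IsDyadic ((r : ℝ) / 2 ^ M) :=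
  ⟨r, M, by push_cast; ring⟩

/-- find a piece of a partition containing a given point (closed version) -/
lemma cover_Icc (n : ℕ) (x : ℕ → ℝ) (hn : 0 < n) (hmono : ∀ i, i < n → x i < x (i + 1))
    {c : ℝ} (h0 : x 0 ≤ c) (h1 : c ≤ x n) : ∃ i, i < n ∧ x i ≤ c ∧ c ≤ x (i + 1) := by
  induction n with
  | zero => omega
  | succ n ih =>
    rcases Nat.eq_zero_or_pos n with rfl | hn'
    · exact ⟨0, by omega, h0, h1⟩
    · rcases le_or_gt c (x n) with h | h
      · obtain ⟨i, hi, h₁, h₂⟩ := ih hn' (fun i hi => hmono i (by omega)) h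
        exact ⟨i, by omega, h₁, h₂⟩
      · exact ⟨n, by omega, le_of_lt h, h1⟩

/-- half-open version -/
lemma cover_Ico (n : ℕ) (x : ℕ → ℝ) (hn : 0 < n) (hmono : ∀ i, i < n → x i < x (i + 1))
    {c : ℝ} (h0 : x 0 ≤ c) (h1 : c < x n) : ∃ i, i < n ∧ x i ≤ c ∧ c < x (i + 1) := by
  induction n with
  | zero => omega
  | succ n ih =>
    rcases Nat.eq_zero_or_pos n with rfl | hn'
    · exact ⟨0, by omega, h0, h1⟩
    · rcases lt_or_ge c (x n) with h | h
      · obtain ⟨i, hi, h₁, h₂⟩ := ih hn' (fun i hi => hmono i (by omega)) h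
        exact ⟨i, by omega, h₁, h₂⟩
      · exact ⟨n, by omega, h, h1⟩

lemma coe_eq_coe_of_int {t s : ℝ} (z : ℤ) (h : t - s = z) : (t : Circle1) = (s : Circle1) := by
  have : (t : Circle1) - (s : Circle1) = ((z : ℝ) : Circle1) := by
    rw [← AddCircle.coe_sub, h]
  have hz : ((z : ℝ) : Circle1) = 0 := by
    rw [AddCircle.coe_eq_zero_iff]
    exact ⟨z, by simp⟩
  rw [hz] at this
  linear_combination (norm := abel) this

lemma coe_int_eq_zero (z : ℤ) : (((z : ℝ)) : Circle1) = 0 := by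
  rw [AddCircle.coe_eq_zero_iff]; exact ⟨z, by simp⟩

lemma exists_rep (q : Circle1) : ∃ t : ℝ, 0 ≤ t ∧ t < 1 ∧ q = (t : Circle1) := by
  obtain ⟨b, hb, h⟩ := AddCircle.eq_coe_Ico q
  exact ⟨b, hb.1, by simpa using hb.2, h.symm⟩

end Statement19Aux
namespace Statement19Aux

/-- inverse of `x0fun` -/
def x0inv : ℝ → ℝ := fun t =>
  if t < 0 then t else if t ≤ 1/2 then t/2 else if t ≤ 3/4 then t - 1/4
    else if t ≤ 1 then 2*t - 1 else t

lemma x0fun_mem {t : ℝ} (h0 : 0 ≤ t) (h1 : t < 1) : 0 ≤ x0fun t ∧ x0fun t < 1 := by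
  unfold x0fun; split_ifs <;> constructor <;> linarith

lemma x0inv_mem {t : ℝ} (h0 : 0 ≤ t) (h1 : t < 1) : 0 ≤ x0inv t ∧ x0inv t < 1 := by
  unfold x0inv; split_ifs <;> constructor <;> linarith

lemma x0inv_x0fun {t : ℝ} (h0 : 0 ≤ t) (h1 : t ≤ 1) : x0inv (x0fun t) = t := by
  unfold x0fun x0inv; split_ifs <;> linarith

lemma x0fun_x0inv {t : ℝ} (h0 : 0 ≤ t) (h1 : t ≤ 1) : x0fun (x0inv t) = t := by
  unfold x0fun x0inv; split_ifs <;> linarith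

/-- The standard generator `x₀` as a permutation of the circle. -/
def X0 : Equiv.Perm Circle1 where
  toFun := AddCircle.liftIco 1 0 (fun t => ((x0fun t : ℝ) : Circle1))
  invFun := AddCircle.liftIco 1 0 (fun t => ((x0inv t : ℝ) : Circle1))
  left_inv := by
    intro q
    obtain ⟨t, h0, h1, rfl⟩ := exists_rep q
    have ht : t ∈ Set.Ico (0:ℝ) (0 + 1) := by constructor <;> simpa
    rw [AddCircle.liftIco_coe_apply ht]
    have hm := x0fun_mem h0 h1
    have ht2 : x0fun t ∈ Set.Ico (0:ℝ) (0 + 1) := by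
      constructor
      · exact hm.1
      · simpa using hm.2
    rw [AddCircle.liftIco_coe_apply ht2, x0inv_x0fun h0 (le_of_lt h1)]
  right_inv := by
    intro q
    obtain ⟨t, h0, h1, rfl⟩ := exists_rep q
    have ht : t ∈ Set.Ico (0:ℝ) (0 + 1) := by constructor <;> simpa
    rw [AddCircle.liftIco_coe_apply ht]
    have hm := x0inv_mem h0 h1
    have ht2 : x0inv t ∈ Set.Ico (0:ℝ) (0 + 1) := by
      constructor
      · exact hm.1
      · simpa using hm.2
    rw [AddCircle.liftIco_coe_apply ht2, x0fun_x0inv h0 (le_of_lt h1)]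

lemma X0_apply {t : ℝ} (h0 : 0 ≤ t) (h1 : t < 1) : X0 ((t : ℝ) : Circle1) = ((x0fun t : ℝ) : Circle1) := by
  have ht : t ∈ Set.Ico (0:ℝ) (0 + 1) := by constructor <;> simpa
  show AddCircle.liftIco (1:ℝ) (0:ℝ) (fun t => ((x0fun t : ℝ) : Circle1)) ((t:ℝ) : Circle1) = _
  rw [AddCircle.liftIco_coe_apply ht]

lemma X0_one : X0 (((1:ℝ)) : Circle1) = (((1:ℝ)) : Circle1) := by
  have h : (((1:ℝ)) : Circle1) = (((0:ℝ)) : Circle1) := coe_eq_coe_of_int 1 (by norm_num)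
  rw [h, X0_apply le_rfl one_pos]
  norm_num [x0fun]

end Statement19Aux
namespace Statement19Aux

lemma x0fun_eval1 {t : ℝ} (h0 : 0 ≤ t) (h1 : t ≤ 1/4) : x0fun t = 2 * t := by
  unfold x0fun; split_ifs <;> linarith

lemma x0fun_eval2 {t : ℝ} (h0 : 1/4 ≤ t) (h1 : t ≤ 1/2) : x0fun t = t + 1/4 := by
  unfold x0fun; split_ifs <;> linarith

lemma x0fun_eval3 {t : ℝ} (h0 : 1/2 ≤ t) (h1 : t ≤ 1) : x0fun t = t/2 + 1/2 := by
  unfold x0fun; split_ifs <;> linarith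

lemma rotC_apply (a t : ℝ) : rotC a ((t : ℝ) : Circle1) = ((t + a : ℝ) : Circle1) := by
  show ((t : ℝ) : Circle1) + ((a : ℝ) : Circle1) = _
  rw [← AddCircle.coe_add]

lemma inT_one : InT 1 := by
  refine ⟨1, one_pos, (fun i => (i : ℝ)), (fun _ => 0), by norm_num, ?_, ?_, ?_, ?_⟩
  · intro i _; push_cast; linarith
  · intro i _; exact isDyadic_int i
  · intro i _; exact isDyadic_zero
  · intro i hi
    interval_cases i
    refine ⟨0, fun t _ => ?_⟩
    show ((t : ℝ) : Circle1) = _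
    norm_num

lemma inT_rot : InT (rotC (1/2)) := by
  refine ⟨1, one_pos, (fun i => (i : ℝ)), (fun _ => 1/2), by norm_num, ?_, ?_, ?_, ?_⟩
  · intro i _; push_cast; linarith
  · intro i _; exact isDyadic_int i
  · intro i _; exact ⟨1, 1, by norm_num⟩
  · intro i hi
    interval_cases i
    refine ⟨0, fun t _ => ?_⟩
    rw [rotC_apply]
    congr 1
    push_cast
    ring

lemma inT_X0 : InT X0 := by
  refine ⟨3, by norm_num,
    (fun i => if i = 0 then 0 else if i = 1 then 1/4 else if i = 2 then 1/2 else 1),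
    (fun i => if i = 0 then 0 else if i = 1 then 1/2 else 3/4), by norm_num, ?_, ?_, ?_, ?_⟩
  · intro i hi; interval_cases i <;> norm_num
  · intro i hi; interval_cases i
    · exact isDyadic_zero
    · exact ⟨1, 2, by norm_num⟩
    · exact ⟨1, 1, by norm_num⟩
    · exact ⟨1, 0, by norm_num⟩
  · intro i hi; interval_cases i
    · exact isDyadic_zero
    · exact ⟨1, 1, by norm_num⟩
    · exact ⟨3, 2, by norm_num⟩
  · intro i hi
    interval_cases i
    · refine ⟨1, fun t ht => ?_⟩
      simp only [Set.mem_Icc] at ht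
      norm_num at ht ⊢
      rw [X0_apply ht.1 (by linarith [ht.2]), x0fun_eval1 ht.1 ht.2]
    · refine ⟨0, fun t ht => ?_⟩
      simp only [Set.mem_Icc] at ht
      norm_num at ht ⊢
      rw [X0_apply (by linarith [ht.1]) (by linarith [ht.2]), x0fun_eval2 ht.1 ht.2]
      congr 1
      ring
    · refine ⟨-1, fun t ht => ?_⟩
      simp only [Set.mem_Icc] at ht
      norm_num at ht ⊢
      rcases lt_or_eq_of_le ht.2 with h | rfl
      · rw [X0_apply (by linarith [ht.1]) h, x0fun_eval3 ht.1 (le_of_lt h)]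
        congr 1
        ring
      · rw [X0_one]
        congr 1
        norm_num

lemma inTArc_X0 : InTArc 0 1 X0 := by
  refine ⟨inT_X0, fun t ht => ?_⟩
  simp only [Set.mem_Icc, zero_add] at ht
  have : t = 1 := le_antisymm ht.2 ht.1
  subst this
  exact X0_one

end Statement19Aux
namespace Statement19Aux

lemma inT_mul {a b : Equiv.Perm Circle1} (ha : InT a) (hb : InT b) : InT (a * b) := by
  classical
  obtain ⟨m, hm, u, v, hu1, humono, hudy, hvdy, hua⟩ := ha
  obtain ⟨n, hn, x, y, hx1, hxmono, hxdy, hydy, hxb⟩ := hb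
  -- totalize slopes
  have hxb' : ∀ i, ∃ kk : ℤ, i < n → ∀ t ∈ Set.Icc (x i) (x (i+1)),
      b ((t : ℝ) : Circle1) = (((y i + (2:ℝ) ^ kk * (t - x i)) : ℝ) : Circle1) := by
    intro i
    by_cases hi : i < n
    · obtain ⟨kk, hkk⟩ := hxb i hi; exact ⟨kk, fun _ => hkk⟩
    · exact ⟨0, fun h => absurd h hi⟩
  choose k hk using hxb'
  have hua' : ∀ j, ∃ ll : ℤ, j < m → ∀ t ∈ Set.Icc (u j) (u (j+1)),
      a ((t : ℝ) : Circle1) = (((v j + (2:ℝ) ^ ll * (t - u j)) : ℝ) : Circle1) := by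
    intro j
    by_cases hj : j < m
    · obtain ⟨ll, hll⟩ := hua j hj; exact ⟨ll, fun _ => hll⟩
    · exact ⟨0, fun h => absurd h hj⟩
  choose l hl using hua'
  -- choose a fine mesh exponent M
  have hα : ∀ i, ∃ N, i ≤ n → D2 N (x i - x 0) := by
    intro i
    by_cases hi : i ≤ n
    · obtain ⟨N, hN⟩ := dyadic_exists_d2 (dyadic_sub (hxdy i hi) (hxdy 0 (Nat.zero_le n)))
      exact ⟨N, fun _ => hN⟩
    · exact ⟨0, fun h => absurd h hi⟩
  choose Nα hNα using hα
  have hβ : ∀ i j, ∃ N, i < n → j ≤ m → D2 N ((2:ℝ) ^ (-(k i)) * (u j - y i)) := by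
    intro i j
    by_cases hij : i < n ∧ j ≤ m
    · obtain ⟨N, hN⟩ := dyadic_exists_d2 (dyadic_zpow_mul _
        (dyadic_sub (hudy j hij.2) (hydy i hij.1)))
      exact ⟨N, fun _ _ => hN⟩
    · exact ⟨0, fun h1 h2 => absurd ⟨h1, h2⟩ hij⟩
  choose Nβ hNβ using hβ
  set M1 := (Finset.range (n+1)).sup Nα with hM1
  set M2 := (Finset.range (n+1)).sup (fun i => (Finset.range (m+1)).sup (Nβ i)) with hM2
  set M3 := (Finset.range n).sup (fun i => (k i).toNat) with hM3
  set M := M1 + M2 + M3 + 1 with hM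
  have hMα : ∀ i, i ≤ n → D2 M (x i - x 0) := by
    intro i hi
    refine d2_mono (hNα i hi) ?_
    have h1 : Nα i ≤ M1 := Finset.le_sup (Finset.mem_range.mpr (by omega))
    omega
  have hMβ : ∀ i j, i < n → j ≤ m → D2 M ((2:ℝ) ^ (-(k i)) * (u j - y i)) := by
    intro i j hi hj
    refine d2_mono (hNβ i j hi hj) ?_
    have h1 : Nβ i j ≤ (Finset.range (m+1)).sup (Nβ i) :=
      Finset.le_sup (Finset.mem_range.mpr (by omega))
    have h2 : (Finset.range (m+1)).sup (Nβ i) ≤ M2 :=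
      Finset.le_sup (f := fun i => (Finset.range (m+1)).sup (Nβ i)) (Finset.mem_range.mpr (by omega))
    omega
  have hMk : ∀ i, i < n → k i ≤ (M : ℤ) := by
    intro i hi
    have h1 : (k i).toNat ≤ M3 := Finset.le_sup (f := fun i => (k i).toNat) (Finset.mem_range.mpr hi)
    have h2 : k i ≤ ((k i).toNat : ℤ) := Int.self_le_toNat _
    have h3 : M3 ≤ M := by omega
    calc k i ≤ ((k i).toNat : ℤ) := h2
      _ ≤ (M3 : ℤ) := by exact_mod_cast h1
      _ ≤ (M : ℤ) := by exact_mod_cast h3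
  have h2M : (0:ℝ) < 2 ^ M := by positivity
  -- the per-cell key fact
  have key : ∀ r : ℕ, ∃ Y : ℝ, ∃ K : ℤ, r < 2 ^ M →
      IsDyadic Y ∧ ∀ t : ℝ, x 0 + (r:ℝ)/2^M ≤ t → t ≤ x 0 + ((r:ℝ)+1)/2^M →
        (a * b) ((t : ℝ) : Circle1) =
          (((Y + (2:ℝ) ^ K * (t - (x 0 + (r:ℝ)/2^M))) : ℝ) : Circle1) := by
    intro r
    by_cases hr : r < 2 ^ M
    swap
    · exact ⟨0, 0, fun h => absurd h hr⟩
    set P : ℝ := x 0 + (r:ℝ)/2^M with hP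
    set P1 : ℝ := x 0 + ((r:ℝ)+1)/2^M with hP1
    -- step 1 : find the b-piece containing [P, P1]
    have hrlt : (r:ℝ) < 2^M := by exact_mod_cast hr
    have hPn : P < x n := by
      rw [hx1, hP]
      have : (r:ℝ)/2^M < 1 := (div_lt_one h2M).mpr hrlt
      linarith
    have hP0 : x 0 ≤ P := by
      rw [hP]
      have : (0:ℝ) ≤ (r:ℝ)/2^M := by positivity
      linarith
    obtain ⟨i, hi, hi1, hi2⟩ := cover_Ico n x hn hxmono hP0 hPn
    have hP1i : P1 ≤ x (i+1) := by
      obtain ⟨c, hc⟩ := hMα (i+1) (by omega)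
      have hxc : x (i+1) = x 0 + (c:ℝ)/2^M := by
        have h2 : x (i+1) - x 0 = (c:ℝ)/2^M := by
          rw [eq_div_iff (ne_of_gt h2M)]; exact hc
        linarith
      have h' : (r:ℝ)/2^M < (c:ℝ)/2^M := by
        rw [hxc] at hi2
        rw [hP] at hi2
        linarith
      have hrc : (r:ℝ) < (c:ℝ) := by
        have h2 := (div_lt_div_iff₀ h2M h2M).mp h'
        exact lt_of_mul_lt_mul_right h2 (le_of_lt h2M)
      have hrc' : (r:ℤ) + 1 ≤ c := by
        have : (r:ℤ) < c := by exact_mod_cast hrc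
        omega
      have hrc'' : ((r:ℝ)+1) ≤ (c:ℝ) := by exact_mod_cast hrc'
      rw [hxc, hP1]
      gcongr
    -- step 2 : find the a-piece containing the image interval
    set e := k i with he
    set A : ℝ := y i + (2:ℝ)^e * (P - x i) with hA
    set s : ℤ := ⌊A - u 0⌋ with hs
    have hAs0 : u 0 ≤ A - s := by
      have := Int.floor_le (A - u 0)
      rw [hs]; linarith
    have hAs1 : A - s < u 0 + 1 := by
      have := Int.lt_floor_add_one (A - u 0)
      rw [hs]; linarith
    have hum : A - s < u m := by rw [hu1]; exact hAs1
    obtain ⟨j, hj, hj1, hj2⟩ := cover_Ico m u hm humono hAs0 hum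
    -- step 2b : distance to u (j+1) is at least 2^(e - M)
    set E : ℝ := (2:ℝ) ^ ((M:ℤ) - e) with hE
    have hEpos : (0:ℝ) < E := by rw [hE]; positivity
    have hEeq : E = (2:ℝ)^(-e) * 2^M := by
      rw [hE, sub_eq_add_neg, add_comm, zpow_add₀ (two_ne_zero : (2:ℝ) ≠ 0), zpow_natCast]
    have hint : ∃ z : ℤ, (u (j+1) + s - A) * E = z := by
      obtain ⟨c2, hc2⟩ := hMβ i (j+1) hi (by omega)
      obtain ⟨c1, hc1⟩ := hMα i (by omega)
      have hnn : (0:ℤ) ≤ (M:ℤ) - e := by have := hMk i hi; omega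
      have hsE : (s:ℝ) * E = ((s * 2 ^ ((M:ℤ) - e).toNat : ℤ) : ℝ) := by
        have hEnat : E = (2:ℝ) ^ (((M:ℤ) - e).toNat) := by
          rw [hE, ← zpow_natCast, Int.toNat_of_nonneg hnn]
        rw [hEnat]; push_cast; ring
      refine ⟨c2 + c1 - r + s * 2 ^ ((M:ℤ) - e).toNat, ?_⟩
      have h2e : (2:ℝ)^(-e) * (2:ℝ)^e = 1 := by
        rw [← zpow_add₀ (two_ne_zero : (2:ℝ) ≠ 0)]; simp
      have expand : (u (j+1) + (s:ℝ) - A) * E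
          = ((2:ℝ)^(-e) * (u (j+1) - y i)) * 2^M - ((P - x i) * 2^M) + (s:ℝ) * E := by
        rw [hEeq, hA]
        linear_combination (-((P - x i) * (2:ℝ)^M)) * h2e
      have hPx : (P - x i) * 2^M = (r:ℝ) - c1 := by
        rw [hP]
        have hpp : (x 0 + (r:ℝ)/2^M - x i) = -(x i - x 0) + (r:ℝ)/2^M := by ring
        rw [hpp, add_mul, neg_mul, hc1]
        field_simp
        ring
      rw [expand, hc2, hPx, hsE]
      push_cast
      ring
    obtain ⟨z, hz⟩ := hint
    have hzpos : 0 < z := by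
      have h1 : (0:ℝ) < (u (j+1) + s - A) * E := mul_pos (by linarith) hEpos
      rw [hz] at h1
      exact_mod_cast h1
    have hz1 : (1:ℝ) ≤ (u (j+1) + s - A) * E := by
      rw [hz]; exact_mod_cast hzpos
    have hgap : A - s + (2:ℝ)^(e - (M:ℤ)) ≤ u (j+1) := by
      have hEinv : (2:ℝ)^(e - (M:ℤ)) = 1 / E := by
        rw [hE, one_div, ← zpow_neg]; congr 1; ring
      rw [hEinv]
      have := (div_le_iff₀ hEpos).mpr hz1
      linarith
    -- step 3 : conclusion
    refine ⟨v j + (2:ℝ)^(l j) * (A - s - u j), l j + e, fun _ => ⟨?_, ?_⟩⟩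
    · -- dyadic
      apply dyadic_add (hvdy j hj)
      apply dyadic_zpow_mul
      apply dyadic_sub
      apply dyadic_sub
      · rw [hA]
        apply dyadic_add (hydy i hi)
        apply dyadic_zpow_mul
        rw [hP]
        have hpp : x 0 + (r:ℝ)/2^M - x i = (r:ℝ)/2^M - (x i - x 0) := by ring
        rw [hpp]
        exact dyadic_sub (isDyadic_nat_div_pow r M)
          (dyadic_sub (hxdy i (by omega)) (hxdy 0 (by omega)))
      · exact isDyadic_int s
      · exact hudy j (by omega)
    · intro t ht1 ht2
      have htx : t ∈ Set.Icc (x i) (x (i+1)) := ⟨le_trans hi1 ht1, le_trans ht2 hP1i⟩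
      have hbt := hk i hi t htx
      set τ : ℝ := y i + (2:ℝ)^e * (t - x i) - s with hτ
      have hτA : τ = A - s + (2:ℝ)^e * (t - P) := by rw [hτ, hA]; ring
      have h2e : (0:ℝ) < (2:ℝ)^e := by positivity
      have hτmem : τ ∈ Set.Icc (u j) (u (j+1)) := by
        constructor
        · rw [hτA]
          have : (0:ℝ) ≤ (2:ℝ)^e * (t - P) := mul_nonneg (le_of_lt h2e) (by linarith)
          linarith
        · rw [hτA]
          have hd : t - P ≤ 1/2^M := by
            rw [hP]
            rw [hP1] at ht2
            have hsplit : ((r:ℝ)+1)/2^M = (r:ℝ)/2^M + 1/2^M := by ring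
            linarith
          have hmul : (2:ℝ)^e * (t - P) ≤ (2:ℝ)^(e - (M:ℤ)) := by
            have hee : (2:ℝ)^(e - (M:ℤ)) = (2:ℝ)^e * (1/2^M) := by
              rw [zpow_sub₀ (two_ne_zero : (2:ℝ) ≠ 0), zpow_natCast]
              ring
            rw [hee]
            exact mul_le_mul_of_nonneg_left hd (le_of_lt h2e)
          linarith [hgap]
      have hat := hl j hj τ hτmem
      have hcoe : (((y i + (2:ℝ)^e * (t - x i)) : ℝ) : Circle1) = ((τ : ℝ) : Circle1) :=
        coe_eq_coe_of_int s (by rw [hτ]; ring)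
      calc (a * b) ((t : ℝ) : Circle1) = a (b ((t : ℝ) : Circle1)) := rfl
        _ = a (((y i + (2:ℝ)^e * (t - x i)) : ℝ) : Circle1) := by rw [hbt]
        _ = a ((τ : ℝ) : Circle1) := by rw [hcoe]
        _ = (((v j + (2:ℝ)^(l j) * (τ - u j)) : ℝ) : Circle1) := hat
        _ = _ := by
              congr 1
              rw [zpow_add₀ (two_ne_zero : (2:ℝ) ≠ 0), hτA]
              ring
  choose Y K hYK using key
  refine ⟨2^M, by positivity, (fun r : ℕ => x 0 + (r:ℝ)/2^M), Y, ?_, ?_, ?_, ?_, ?_⟩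
  · show x 0 + ((2^M : ℕ):ℝ)/2^M = x 0 + ((0:ℕ):ℝ)/2^M + 1
    push_cast
    rw [div_self (ne_of_gt h2M)]
    norm_num
  · intro r _
    show x 0 + (r:ℝ)/2^M < x 0 + ((r+1 : ℕ):ℝ)/2^M
    push_cast
    have h' : (r:ℝ)/2^M < ((r:ℝ)+1)/2^M := by
      apply (div_lt_div_iff₀ h2M h2M).mpr
      nlinarith
    linarith
  · intro r _
    exact dyadic_add (hxdy 0 (Nat.zero_le n)) (isDyadic_nat_div_pow r M)
  · intro r hr
    exact (hYK r hr).1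
  · intro r hr
    refine ⟨K r, fun t ht => ?_⟩
    obtain ⟨ht1, ht2⟩ := ht
    have ht2' : t ≤ x 0 + ((r:ℝ)+1)/2^M := by
      have : ((r+1 : ℕ):ℝ) = (r:ℝ)+1 := by push_cast; ring
      rw [← this]
      exact ht2
    exact (hYK r hr).2 t ht1 ht2'

end Statement19Aux
namespace Statement19Aux

lemma X0_eval_double {d : ℝ} (h0 : 0 ≤ d) (h1 : d ≤ 1/4) :
    X0 ((d : ℝ) : Circle1) = ((2*d : ℝ) : Circle1) := by
  rw [X0_apply h0 (by linarith), x0fun_eval1 h0 h1]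

lemma X0_eval_shift {d : ℝ} (h0 : 1/4 ≤ d) (h1 : d ≤ 1/2) :
    X0 ((d : ℝ) : Circle1) = ((d + 1/4 : ℝ) : Circle1) := by
  rw [X0_apply (by linarith) (by linarith), x0fun_eval2 h0 h1]

lemma reach_zero (G : Subgroup (Equiv.Perm Circle1))
    (hF : ∀ g : Equiv.Perm Circle1, InTArc 0 1 g → g ∈ G)
    (hα : rotC (1/2) ∈ G) :
    ∀ n : ℕ, ∀ aa : ℤ, ∀ d : ℝ, d = (aa:ℝ) / 2^n → 0 ≤ d → d < 1 →
      ∃ p : Equiv.Perm Circle1, p ∈ G ∧ InT p ∧ p ((d : ℝ) : Circle1) = (((0:ℝ)) : Circle1) := by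
  have hX0G : X0 ∈ G := hF X0 inTArc_X0
  intro n
  induction n with
  | zero =>
    intro aa d hd h0 h1
    have haa : aa = 0 := by
      rw [hd] at h0 h1
      norm_num at h0 h1
      exact_mod_cast le_antisymm (by exact_mod_cast Int.lt_add_one_iff.mp (by exact_mod_cast h1)) (by exact_mod_cast h0)
    have hd0 : d = 0 := by rw [hd, haa]; norm_num
    exact ⟨1, one_mem G, inT_one, by rw [hd0]; simp⟩
  | succ n ih =>
    intro aa d hd h0 h1
    by_cases hpar : ∃ bb : ℤ, aa = 2 * bb
    · obtain ⟨bb, rfl⟩ := hpar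
      refine ih bb d ?_ h0 h1
      rw [hd]
      push_cast
      rw [pow_succ]
      field_simp
    · have hodd : aa % 2 = 1 := by
        rcases Int.even_or_odd aa with ⟨b, hb⟩ | ⟨b, hb⟩
        · exact absurd ⟨b, by omega⟩ hpar
        · omega
      have haapos : 0 < aa := by
        rcases lt_trichotomy aa 0 with hneg | hz | hpos
        · exfalso
          have h0' : (aa:ℝ) < 0 := by exact_mod_cast hneg
          have h2p : (0:ℝ) < 2^(n+1) := by positivity
          have : (aa:ℝ)/2^(n+1) < 0 := div_neg_of_neg_of_pos h0' h2p
          rw [hd] at h0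
          linarith
        · omega
        · exact hpos
      have hdpos : 0 < d := by
        rw [hd]
        positivity
      -- handler for 0 < d < 1/2
      have step_small : ∀ bb : ℤ, ∀ dd : ℝ, dd = (bb:ℝ)/2^(n+1) → 0 < dd → dd < 1/2 →
          ∃ p : Equiv.Perm Circle1, p ∈ G ∧ InT p ∧
            p ((dd : ℝ) : Circle1) = (((0:ℝ)) : Circle1) := by
        intro bb dd hdd hd0 hd1
        rcases le_or_gt dd (1/4) with h4 | h4
        · obtain ⟨p', hG, hT, hp'⟩ := ih bb (2*dd) (by rw [hdd]; rw [pow_succ]; field_simp)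
            (by linarith) (by linarith)
          refine ⟨p' * X0, mul_mem hG hX0G, inT_mul hT inT_X0, ?_⟩
          rw [Equiv.Perm.mul_apply, X0_eval_double (le_of_lt hd0) h4, hp']
        · -- 1/4 < dd < 1/2
          rcases n with _ | n'
          · exfalso
            have hb1 : (1:ℝ)/2 < (bb:ℝ) := by
              rw [hdd] at h4
              norm_num at h4 ⊢
              linarith
            have hb2 : (bb:ℝ) < 1 := by
              rw [hdd] at hd1
              norm_num at hd1 ⊢
              linarith
            have hbb1 : 0 < bb := by
              have : (0:ℝ) < (bb:ℝ) := by linarith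
              exact_mod_cast this
            have hbb2 : bb < 1 := by exact_mod_cast hb2
            omega
          · set cc : ℤ := bb - 2^n' with hcc
            set ee : ℝ := 2*dd - 1/2 with hee
            have heq : ee = (cc:ℝ)/2^(n'+1) := by
              rw [hee, hdd, hcc]
              push_cast
              rw [pow_succ, pow_succ]
              field_simp
            obtain ⟨p', hG, hT, hp'⟩ := ih cc ee heq (by rw [hee]; linarith) (by rw [hee]; linarith)
            refine ⟨p' * X0 * rotC (1/2) * X0, ?_, ?_, ?_⟩
            · exact mul_mem (mul_mem (mul_mem hG hX0G) hα) hX0G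
            · exact inT_mul (inT_mul (inT_mul hT inT_X0) inT_rot) inT_X0
            · rw [Equiv.Perm.mul_apply, Equiv.Perm.mul_apply, Equiv.Perm.mul_apply]
              rw [X0_eval_shift (le_of_lt h4) (le_of_lt hd1), rotC_apply]
              have hcoe : ((dd + 1/4 + 1/2 : ℝ) : Circle1) = ((dd - 1/4 : ℝ) : Circle1) :=
                coe_eq_coe_of_int 1 (by push_cast; ring)
              rw [hcoe, X0_eval_double (by linarith) (by linarith)]
              have h2 : 2 * (dd - 1/4) = ee := by rw [hee]; ring
              rw [h2, hp']
      rcases lt_trichotomy d (1/2) with hlt | hEq | hgt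
      · exact step_small aa d hd hdpos hlt
      · refine ⟨rotC (1/2), hα, inT_rot, ?_⟩
        rw [hEq, rotC_apply]
        exact coe_eq_coe_of_int 1 (by norm_num)
      · obtain ⟨p', hG, hT, hp'⟩ := step_small (aa - 2^n) (d - 1/2)
          (by rw [hd]; push_cast; rw [pow_succ]; field_simp)
          (by linarith) (by linarith)
        refine ⟨p' * rotC (1/2), mul_mem hG hα, inT_mul hT inT_rot, ?_⟩
        rw [Equiv.Perm.mul_apply, rotC_apply]
        have hcoe : ((d + 1/2 : ℝ) : Circle1) = ((d - 1/2 : ℝ) : Circle1) :=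
          coe_eq_coe_of_int 1 (by push_cast; ring)
        rw [hcoe, hp']

lemma inT_zero_image {g : Equiv.Perm Circle1} (hg : InT g) :
    ∃ N : ℕ, ∃ aa : ℤ, 0 ≤ (aa:ℝ)/2^N ∧ (aa:ℝ)/2^N < 1 ∧
      g (((0:ℝ)) : Circle1) = ((((aa:ℝ)/2^N) : ℝ) : Circle1) := by
  obtain ⟨n, hn, x, y, hx1, hmono, hxdy, hydy, hpc⟩ := hg
  set c : ℤ := ⌈x 0⌉ with hc
  have h0 : x 0 ≤ (c:ℝ) := Int.le_ceil _
  have h1 : (c:ℝ) ≤ x n := by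
    rw [hx1]
    have := Int.ceil_lt_add_one (x 0)
    rw [← hc] at this
    linarith
  obtain ⟨i, hi, hc1, hc2⟩ := cover_Icc n x hn hmono h0 h1
  obtain ⟨k, hk⟩ := hpc i hi
  have hval := hk (c:ℝ) ⟨hc1, hc2⟩
  have hc0 : (((c:ℝ)) : Circle1) = (((0:ℝ)) : Circle1) := coe_eq_coe_of_int c (by ring)
  set E : ℝ := y i + 2^k * ((c:ℝ) - x i) with hE
  have hEdy : IsDyadic E :=
    dyadic_add (hydy i hi) (dyadic_zpow_mul _ (dyadic_sub (isDyadic_int c) (hxdy i (le_of_lt hi))))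
  have hfr : Int.fract E = E - (⌊E⌋ : ℝ) := rfl
  have hddy : IsDyadic (Int.fract E) := by
    rw [hfr]; exact dyadic_sub hEdy (isDyadic_int ⌊E⌋)
  obtain ⟨aa, N, hdd⟩ := hddy
  refine ⟨N, aa, ?_, ?_, ?_⟩
  · rw [← hdd]; exact Int.fract_nonneg E
  · rw [← hdd]; exact Int.fract_lt_one E
  · rw [← hc0, hval, ← hdd]
    exact coe_eq_coe_of_int ⌊E⌋ (by rw [hfr]; ring)

end Statement19Aux
open Statement19Aux in
theorem statement19 (G : Subgroup (Equiv.Perm Circle1))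
    (hGT : (G : Set (Equiv.Perm Circle1)) ⊆ {g | InT g})
    (hF : ∀ g : Equiv.Perm Circle1, InTArc 0 1 g → g ∈ G)
    (hα : rotC (1/2) ∈ G) :
    (G : Set (Equiv.Perm Circle1)) = {g | InT g} := by
  apply Set.Subset.antisymm hGT
  intro g hg
  simp only [Set.mem_setOf_eq] at hg
  obtain ⟨N, aa, h0, h1, hg0⟩ := inT_zero_image hg
  obtain ⟨p, hpG, hpT, hp0⟩ := reach_zero G hF hα N aa _ rfl h0 h1
  have hw : InTArc 0 1 (p * g) := by
    refine ⟨inT_mul hpT hg, fun t ht => ?_⟩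
    simp only [Set.mem_Icc, zero_add] at ht
    have ht1 : t = 1 := le_antisymm ht.2 ht.1
    subst ht1
    have h10 : (((1:ℝ)) : Circle1) = (((0:ℝ)) : Circle1) :=
      coe_eq_coe_of_int 1 (by norm_num)
    rw [h10, Equiv.Perm.mul_apply, hg0, hp0]
  have hwG : p * g ∈ G := hF _ hw
  have hgG : g ∈ G := by
    have h2 := mul_mem (inv_mem hpG) hwG
    rwa [← mul_assoc, inv_mul_cancel, one_mul] at h2
  exact hgG

end
end
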